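/- arXiv:2405.10538 — 4 statements merged into one kernel-verified Lean document; each statement's English description precedes it below -/
import Mathlib

section
/- Let φ : ℕ → ℝ be non-decreasing with φ(n) ≥ 2 for all n. If the series ∑_{n≥1} ( n·(log φ(n))⁴/φ(n)² + log φ(n)/φ(n) ) converges, then the set F₃(φ) has Lebesgue measure zero. -/
open MeasureTheory Filter Set

/-- The Gauss map `T(x) = 1/x - ⌊1/x⌋`. -/
noncomputable def gaussMap (x : ℝ) : ℝ := 1 / x - ⌊1 / x⌋

/-- `cfA n x` is the `n`-th partial quotient `aₙ(x)` of `x` (for `n ≥ 1`),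
defined by `a₁(x) = ⌊1/x⌋` and `a_{n+1}(x) = a₁(Tⁿ x)`. -/
noncomputable def cfA (n : ℕ) (x : ℝ) : ℕ := ⌊1 / (gaussMap^[n - 1] x)⌋₊

/-- `cfProd ℓ n x = aₙ(x) · a_{n+1}(x) ⋯ a_{n+ℓ-1}(x)`. -/
noncomputable def cfProd (ℓ n : ℕ) (x : ℝ) : ℕ := ∏ i ∈ Finset.range ℓ, cfA (n + i) x

/-- The set `F_ℓ(φ)` of irrational `x ∈ (0,1)` such that for infinitely many `n`
there are `1 ≤ j < k ≤ n` with both products of `ℓ` consecutive partial quotients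
starting at `j` and at `k` at least `φ(n)`. -/
noncomputable def Fset (ℓ : ℕ) (φ : ℕ → ℝ) : Set ℝ :=
  {x | x ∈ Set.Ioo (0 : ℝ) 1 ∧ Irrational x ∧
    ∀ N : ℕ, ∃ n : ℕ, N ≤ n ∧ ∃ j k : ℕ, 1 ≤ j ∧ j < k ∧ k ≤ n ∧
      φ n ≤ (cfProd ℓ j x : ℝ) ∧ φ n ≤ (cfProd ℓ k x : ℝ)}

/-!
Write `E_j(B)` for the event `aⱼ a_{j+1} a_{j+2} ≥ B`. As `φ` is monotone and unbounded, a point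
of `F₃(φ)` lies in `⋃_{j<k} E_j(φ k) ∩ E_k(φ k)` for infinitely many `k`, so by Borel–Cantelli it
suffices that these unions have summable measures.

Two properties of the Gauss map `T` give the estimates. Conditioning on a partial quotient `d`
costs a factor `1/d²`, the Lipschitz constant of the inverse branch `t ↦ 1/(d+t)`; this gives
`λ(E₁(B)) ≲ log² B / B` and, for the overlapping pairs, `λ(E₁ ∩ E₂), λ(E₁ ∩ E₃) ≲ log B / B`.
And Lebesgue measure is quasi-invariant, `λ(T⁻ⁿ A) ≤ 2 λ(A)`, since the rank-`n` cylinders are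
disjoint and `T⁻ⁿ` maps into each of them with Lipschitz constant at most twice its length.
This reduces `E_j ∩ E_k` to `E₁ ∩ E_{k-j+1}` and makes `E₁` and `E_g` quasi-independent for
`g ≥ 4`, so that `λ(E₁ ∩ E_g) ≲ log⁴ B / B²`. Summing over `j < k`, the union has measure
`≲ k log⁴ φ(k) / φ(k)² + log φ(k) / φ(k)`.
-/

open scoped ENNReal

def gaussDomain : Set ℝ := {x | x ∈ Ioo 0 1 ∧ Irrational x}

section GaussMap

variable {x : ℝ}

lemma cfA_one (x : ℝ) : cfA 1 x = ⌊1 / x⌋₊ := rfl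

lemma gaussMap_eq_sub_cfA (hx : 0 < x) : gaussMap x = 1 / x - cfA 1 x := by
  rw [gaussMap, cfA_one, natCast_floor_eq_intCast_floor (by positivity)]

lemma gaussMap_mem (hx : x ∈ gaussDomain) : gaussMap x ∈ gaussDomain := by
  obtain ⟨⟨hx0, -⟩, hirr⟩ := hx
  have hT : Irrational (gaussMap x) := by
    rw [gaussMap_eq_sub_cfA hx0, one_div]
    exact (irrational_inv_iff.2 hirr).sub_natCast _
  refine ⟨⟨(Int.fract_nonneg (1 / x)).lt_of_ne' ?_, Int.fract_lt_one (1 / x)⟩, hT⟩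
  exact_mod_cast hT.ne_nat 0

lemma iterate_gaussMap_mem (hx : x ∈ gaussDomain) (n : ℕ) : gaussMap^[n] x ∈ gaussDomain := by
  induction n with
  | zero => exact hx
  | succ n ih => rw [Function.iterate_succ_apply']; exact gaussMap_mem ih

lemma one_le_cfA (hx : x ∈ gaussDomain) (n : ℕ) : 1 ≤ cfA n x := by
  obtain ⟨⟨hy0, hy1⟩, -⟩ := iterate_gaussMap_mem hx (n - 1)
  exact Nat.le_floor (by rw [Nat.cast_one, le_div_iff₀ hy0]; linarith)

lemma eq_one_div_cfA_add_gaussMap (hx : x ∈ gaussDomain) :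
    x = 1 / (cfA 1 x + gaussMap x) := by
  rw [gaussMap_eq_sub_cfA hx.1.1]; simp

lemma cfA_add (n : ℕ) {m : ℕ} (hm : 1 ≤ m) (x : ℝ) :
    cfA (n + m) x = cfA m (gaussMap^[n] x) := by
  rw [cfA, cfA, ← Function.iterate_add_apply, show n + m - 1 = m - 1 + n by omega]

lemma cfA_succ {n : ℕ} (hn : 1 ≤ n) (x : ℝ) : cfA (n + 1) x = cfA n (gaussMap x) := by
  rw [add_comm, cfA_add 1 hn]; rfl

lemma cfProd_add (ℓ n : ℕ) {m : ℕ} (hm : 1 ≤ m) (x : ℝ) :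
    cfProd ℓ (n + m) x = cfProd ℓ m (gaussMap^[n] x) := by
  refine Finset.prod_congr rfl fun i _ => ?_
  rw [add_assoc, cfA_add n (by omega)]

lemma cfProd_three (j : ℕ) (x : ℝ) :
    (cfProd 3 j x : ℝ) = (cfA j x : ℝ) * cfA (j + 1) x * cfA (j + 2) x := by
  simp [cfProd, Finset.prod_range_succ]

end GaussMap

section Cylinders

/-- The inverse branch of `gaussMap^[n]` on the points whose first partial quotients are
`w = [a₁, …, aₙ]`. -/
noncomputable def cfBranch : List ℕ → ℝ → ℝ
  | [], t => t
  | a :: w, t => 1 / (a + cfBranch w t)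

noncomputable def cfDigits : ℕ → ℝ → List ℕ
  | 0, _ => []
  | n + 1, x => cfA 1 x :: cfDigits n (gaussMap x)

/-- The coefficients of `cfBranch w t = (p + p' * t) / (q + q' * t)`. -/
structure MobiusCoeffs where
  p : ℕ
  p' : ℕ
  q : ℕ
  q' : ℕ

def cfCoeffs : List ℕ → MobiusCoeffs
  | [] => ⟨0, 1, 1, 0⟩
  | a :: w => ⟨(cfCoeffs w).q, (cfCoeffs w).q', a * (cfCoeffs w).q + (cfCoeffs w).p,
      a * (cfCoeffs w).q' + (cfCoeffs w).p'⟩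

def PosWord (w : List ℕ) : Prop := ∀ a ∈ w, 1 ≤ a

variable {w : List ℕ}

lemma PosWord.tail {a : ℕ} (hw : PosWord (a :: w)) : PosWord w :=
  fun b hb => hw b (List.mem_cons_of_mem a hb)

lemma PosWord.head {a : ℕ} (hw : PosWord (a :: w)) : 1 ≤ a := hw a List.mem_cons_self

lemma cfCoeffs_det (w : List ℕ) :
    ((cfCoeffs w).p' * (cfCoeffs w).q : ℤ) - (cfCoeffs w).p * (cfCoeffs w).q' =
      (-1) ^ w.length := by
  induction w with
  | nil => simp [cfCoeffs]
  | cons a w ih =>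
    simp only [cfCoeffs, List.length_cons, pow_succ]
    push_cast
    linear_combination -ih

/-- The last inequality is only there to carry the induction. -/
lemma cfCoeffs_bounds (hw : PosWord w) :
    1 ≤ (cfCoeffs w).q ∧ (cfCoeffs w).q' ≤ (cfCoeffs w).q ∧
      (cfCoeffs w).q' + (cfCoeffs w).p' ≤ (cfCoeffs w).q + (cfCoeffs w).p := by
  induction w with
  | nil => simp [cfCoeffs]
  | cons a w ih =>
    obtain ⟨h1, h2, h3⟩ := ih hw.tail
    have ha := hw.head
    simp only [cfCoeffs]
    exact ⟨by nlinarith, by nlinarith, by nlinarith⟩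

lemma one_le_cfCoeffs_q (hw : PosWord w) : (1 : ℝ) ≤ (cfCoeffs w).q := by
  exact_mod_cast (cfCoeffs_bounds hw).1

lemma cfBranch_eq (hw : PosWord w) {t : ℝ} (ht : 0 ≤ t) :
    cfBranch w t =
      ((cfCoeffs w).p + (cfCoeffs w).p' * t) / ((cfCoeffs w).q + (cfCoeffs w).q' * t) := by
  induction w with
  | nil => simp [cfBranch, cfCoeffs]
  | cons a w ih =>
    have hq := one_le_cfCoeffs_q hw.tail
    have hden : (0 : ℝ) < (cfCoeffs w).q + (cfCoeffs w).q' * t := by positivity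
    rw [cfBranch, ih hw.tail, add_div' _ _ _ hden.ne', one_div_div]
    simp only [cfCoeffs]
    push_cast
    congr 1; ring

lemma cfBranch_sub (hw : PosWord w) {t s : ℝ} (ht : 0 ≤ t) (hs : 0 ≤ s) :
    cfBranch w t - cfBranch w s = (-1) ^ w.length * (t - s) /
      (((cfCoeffs w).q + (cfCoeffs w).q' * t) * ((cfCoeffs w).q + (cfCoeffs w).q' * s)) := by
  have hq := one_le_cfCoeffs_q hw
  have hdet : ((cfCoeffs w).p' * (cfCoeffs w).q : ℝ) - (cfCoeffs w).p * (cfCoeffs w).q' =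
      (-1) ^ w.length := by exact_mod_cast cfCoeffs_det w
  rw [cfBranch_eq hw ht, cfBranch_eq hw hs, div_sub_div _ _ (by positivity) (by positivity),
    ← hdet]
  ring

lemma abs_cfBranch_sub (hw : PosWord w) {t s : ℝ} (ht : 0 ≤ t) (hs : 0 ≤ s) :
    |cfBranch w t - cfBranch w s| = |t - s| /
      (((cfCoeffs w).q + (cfCoeffs w).q' * t) * ((cfCoeffs w).q + (cfCoeffs w).q' * s)) := by
  have hq := one_le_cfCoeffs_q hw
  have hD : (0 : ℝ) <
      ((cfCoeffs w).q + (cfCoeffs w).q' * t) * ((cfCoeffs w).q + (cfCoeffs w).q' * s) := by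
    positivity
  rw [cfBranch_sub hw ht hs, abs_div, abs_of_pos hD, abs_mul, abs_pow, abs_neg, abs_one, one_pow,
    one_mul]

lemma abs_cfBranch_sub_le (hw : PosWord w) {t s : ℝ} (ht : 0 ≤ t) (hs : 0 ≤ s) :
    |cfBranch w t - cfBranch w s| ≤ |t - s| / (cfCoeffs w).q ^ 2 := by
  have hq := one_le_cfCoeffs_q hw
  have hq' : (0 : ℝ) ≤ (cfCoeffs w).q' := Nat.cast_nonneg _
  rw [abs_cfBranch_sub hw ht hs]
  refine div_le_div_of_nonneg_left (abs_nonneg _) (by positivity) ?_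
  nlinarith [mul_nonneg hq' ht, mul_nonneg hq' hs,
    mul_nonneg (mul_nonneg hq' ht) (mul_nonneg hq' hs)]

lemma volume_image_cfBranch_le (hw : PosWord w) {s : Set ℝ} (hs : s ⊆ Ici 0) :
    volume (cfBranch w '' s) ≤ ENNReal.ofReal (1 / (cfCoeffs w).q ^ 2) * volume s := by
  have hlip : LipschitzOnWith (1 / (cfCoeffs w).q ^ 2 : ℝ).toNNReal (cfBranch w) s := by
    refine LipschitzOnWith.of_dist_le_mul fun t ht u hu => ?_
    rw [Real.dist_eq, Real.dist_eq, Real.coe_toNNReal _ (by positivity), one_div_mul_eq_div]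
    exact abs_cfBranch_sub_le hw (hs ht) (hs hu)
  have := hlip.hausdorffMeasure_image_le zero_le_one
  rwa [hausdorffMeasure_real, ENNReal.rpow_one] at this

lemma cfBranch_mem_Icc (hw : PosWord w) {t : ℝ} (ht : t ∈ Icc 0 1) : cfBranch w t ∈ Icc 0 1 := by
  induction w with
  | nil => exact ht
  | cons a w ih =>
    have ha : (1 : ℝ) ≤ a := by exact_mod_cast hw.head
    obtain ⟨h0, -⟩ := ih hw.tail
    exact ⟨by rw [cfBranch]; positivity, by rw [cfBranch, div_le_one (by positivity)]; linarith⟩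

lemma continuousOn_cfBranch (hw : PosWord w) : ContinuousOn (cfBranch w) (Icc 0 1) := by
  induction w with
  | nil => exact continuousOn_id
  | cons a w ih =>
    have ha : (1 : ℝ) ≤ a := by exact_mod_cast hw.head
    refine continuousOn_const.div (continuousOn_const.add (ih hw.tail)) fun t ht => ?_
    linarith [(cfBranch_mem_Icc hw.tail ht).1]

lemma cfBranch_mem_gaussDomain (hw : PosWord w) {t : ℝ} (ht : t ∈ gaussDomain) :
    cfBranch w t ∈ gaussDomain ∧ cfDigits w.length (cfBranch w t) = w := by
  induction w with
  | nil => exact ⟨ht, rfl⟩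
  | cons a w ih =>
    obtain ⟨⟨⟨hs0, hs1⟩, hsirr⟩, hdig⟩ := ih hw.tail
    set s := cfBranch w t
    have ha : (1 : ℝ) ≤ a := by exact_mod_cast hw.head
    have hinv : 1 / cfBranch (a :: w) t = a + s := by rw [cfBranch, one_div_one_div]
    have hcfA : cfA 1 (cfBranch (a :: w) t) = a := by
      rw [cfA_one, hinv, Nat.floor_eq_iff (by positivity)]
      constructor <;> linarith
    have hgauss : gaussMap (cfBranch (a :: w) t) = s := by
      rw [gaussMap_eq_sub_cfA (by rw [cfBranch]; positivity), hinv, hcfA]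
      ring
    refine ⟨⟨⟨by rw [cfBranch]; positivity, ?_⟩, ?_⟩, ?_⟩
    · rw [cfBranch, div_lt_one (by positivity)]; linarith
    · rw [cfBranch, one_div, irrational_inv_iff]; exact hsirr.natCast_add a
    · rw [List.length_cons, cfDigits, hcfA, hgauss, hdig]

lemma Irrational.of_cfBranch {t : ℝ} (h : Irrational (cfBranch w t)) : Irrational t := by
  induction w with
  | nil => exact h
  | cons a w ih =>
    rw [cfBranch, one_div, irrational_inv_iff] at h
    exact ih (h.of_natCast_add a)

lemma cfBranch_cfDigits {x : ℝ} (hx : x ∈ gaussDomain) (n : ℕ) :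
    cfBranch (cfDigits n x) (gaussMap^[n] x) = x := by
  induction n generalizing x with
  | zero => rfl
  | succ n ih =>
    rw [cfDigits, cfBranch, Function.iterate_succ_apply, ih (gaussMap_mem hx),
      ← eq_one_div_cfA_add_gaussMap hx]

lemma posWord_cfDigits {x : ℝ} (hx : x ∈ gaussDomain) (n : ℕ) : PosWord (cfDigits n x) := by
  induction n generalizing x with
  | zero => simp [PosWord, cfDigits]
  | succ n ih =>
    intro a ha
    rcases List.mem_cons.1 ha with rfl | ha
    · exact one_le_cfA hx 1
    · exact ih (gaussMap_mem hx) a ha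

lemma length_cfDigits (n : ℕ) (x : ℝ) : (cfDigits n x).length = n := by
  induction n generalizing x with
  | zero => rfl
  | succ n ih => simp [cfDigits, ih]

end Cylinders

section QuasiInvariance

/-- The cylinder `cfBranch w '' [0, 1]` has length `1 / (q (q + q')) ≥ 1 / (2 q²)`, and distinct
cylinders of the same rank meet only in rational points. -/
lemma tsum_ofReal_one_div_cfCoeffs_q_sq_le_two (n : ℕ) :
    ∑' w : {w : List ℕ // w.length = n ∧ PosWord w},
      ENNReal.ofReal (1 / (cfCoeffs w.1).q ^ 2) ≤ 2 := by
  set J : {w : List ℕ // w.length = n ∧ PosWord w} → Set ℝ := fun w => cfBranch w.1 '' Icc 0 1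
  have hweight : ∀ w, ENNReal.ofReal (1 / (cfCoeffs w.1).q ^ 2) ≤ 2 * volume (J w) := by
    rintro ⟨w, hlen, hw⟩
    have hq := one_le_cfCoeffs_q hw
    have hq' : ((cfCoeffs w).q' : ℝ) ≤ (cfCoeffs w).q := by exact_mod_cast (cfCoeffs_bounds hw).2.1
    have hcont : ContinuousOn (cfBranch w) (uIcc 0 1) := by
      rw [uIcc_of_le zero_le_one]; exact continuousOn_cfBranch hw
    have hcyl : ENNReal.ofReal |cfBranch w 1 - cfBranch w 0| ≤ volume (cfBranch w '' Icc 0 1) := by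
      simpa [uIcc_of_le zero_le_one] using
        measure_mono (μ := volume) (intermediate_value_uIcc hcont)
    rw [abs_cfBranch_sub hw zero_le_one le_rfl] at hcyl
    simp only [sub_zero, abs_one, mul_one, mul_zero, add_zero] at hcyl
    refine le_trans ?_ (mul_le_mul_right hcyl 2)
    rw [← ENNReal.ofReal_ofNat 2, ← ENNReal.ofReal_mul zero_le_two]
    gcongr
    rw [div_le_iff₀ (by positivity)]
    field_simp
    nlinarith
  have hdisj : Pairwise (Function.onFun (AEDisjoint volume) J) := by
    intro w w' hne
    refine measure_mono_null (fun y hy => ?_) ((countable_range ((↑) : ℚ → ℝ)).measure_zero _)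
    by_contra hirr
    obtain ⟨⟨t, ht, rfl⟩, ⟨t', ht', heq⟩⟩ := hy
    have hdigits : ∀ (v : {w : List ℕ // w.length = n ∧ PosWord w}) (s : ℝ), s ∈ Icc 0 1 →
        Irrational (cfBranch v.1 s) → cfDigits n (cfBranch v.1 s) = v.1 := by
      rintro ⟨v, hlen, hv⟩ s ⟨hs0, hs1⟩ hs
      have hs := hs.of_cfBranch
      have hsΩ : s ∈ gaussDomain :=
        ⟨⟨hs0.lt_of_ne' (by exact_mod_cast hs.ne_nat 0),
          hs1.lt_of_ne (by exact_mod_cast hs.ne_nat 1)⟩, hs⟩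
      simpa [hlen] using (cfBranch_mem_gaussDomain hv hsΩ).2
    exact hne (Subtype.ext (by
      rw [← hdigits w t ht hirr, ← hdigits w' t' ht' (heq ▸ hirr), heq]))
  have hmeas : ∀ w, NullMeasurableSet (J w) volume := fun w =>
    (isCompact_Icc.image_of_continuousOn
      (continuousOn_cfBranch w.2.2)).isClosed.measurableSet.nullMeasurableSet
  have hunion : (⋃ w, J w) ⊆ Icc 0 1 := by
    rintro _ ⟨_, ⟨w, rfl⟩, ⟨t, ht, rfl⟩⟩
    exact cfBranch_mem_Icc w.2.2 ht
  calc ∑' w, ENNReal.ofReal (1 / (cfCoeffs w.1).q ^ 2)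
      ≤ ∑' w, 2 * volume (J w) := ENNReal.tsum_le_tsum hweight
    _ = 2 * volume (⋃ w, J w) := by rw [ENNReal.tsum_mul_left, measure_iUnion₀ hdisj hmeas]
    _ ≤ 2 * volume (Icc (0 : ℝ) 1) := by gcongr
    _ = 2 := by simp

lemma volume_setOf_iterate_gaussMap_mem_le (n : ℕ) (A : Set ℝ) :
    volume {x | x ∈ gaussDomain ∧ gaussMap^[n] x ∈ A} ≤ 2 * volume A := by
  have hcover : {x | x ∈ gaussDomain ∧ gaussMap^[n] x ∈ A} ⊆
      ⋃ w : {w : List ℕ // w.length = n ∧ PosWord w}, cfBranch w.1 '' (A ∩ Ici 0) := by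
    rintro x ⟨hx, hA⟩
    refine mem_iUnion.2 ⟨⟨cfDigits n x, length_cfDigits n x, posWord_cfDigits hx n⟩, ?_⟩
    exact ⟨_, ⟨hA, (iterate_gaussMap_mem hx n).1.1.le⟩, cfBranch_cfDigits hx n⟩
  calc _ ≤ ∑' w : {w : List ℕ // w.length = n ∧ PosWord w},
        volume (cfBranch w.1 '' (A ∩ Ici 0)) := (measure_mono hcover).trans (measure_iUnion_le _)
    _ ≤ ∑' w : {w : List ℕ // w.length = n ∧ PosWord w},
        ENNReal.ofReal (1 / (cfCoeffs w.1).q ^ 2) * volume A :=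
      ENNReal.tsum_le_tsum fun w => (volume_image_cfBranch_le w.2.2 inter_subset_right).trans
        (mul_le_mul_right (measure_mono inter_subset_left) _)
    _ ≤ 2 * volume A := by
      rw [ENNReal.tsum_mul_right]
      exact mul_le_mul_left (tsum_ofReal_one_div_cfCoeffs_q_sq_le_two n) _

end QuasiInvariance

section DigitConditioning

/-- Vanishes at `d = 0` (as `0⁻¹ = 0`), which is never a partial quotient. -/
noncomputable def digitWeight (d : ℕ) : ℝ≥0∞ := ENNReal.ofReal ((d : ℝ) ^ 2)⁻¹

lemma digitWeight_zero : digitWeight 0 = 0 := by simp [digitWeight]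

lemma volume_setOf_gaussMap_mem_le (G : ℕ → Set ℝ) :
    volume {x | x ∈ gaussDomain ∧ gaussMap x ∈ G (cfA 1 x)} ≤
      ∑' d, digitWeight d * volume (G d) := by
  have hcover : {x | x ∈ gaussDomain ∧ gaussMap x ∈ G (cfA 1 x)} ⊆
      ⋃ d, ⋃ (_ : 1 ≤ d), cfBranch [d] '' (G d ∩ Ici 0) := by
    rintro x ⟨hx, hG⟩
    refine mem_iUnion₂.2 ⟨cfA 1 x, one_le_cfA hx 1, gaussMap x,
      ⟨hG, (gaussMap_mem hx).1.1.le⟩, (eq_one_div_cfA_add_gaussMap hx).symm⟩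
  refine (measure_mono hcover).trans
    ((measure_iUnion_le _).trans (ENNReal.tsum_le_tsum fun d => ?_))
  rcases Nat.eq_zero_or_pos d with rfl | hd
  · simp
  have hw : PosWord [d] := fun a ha => by rw [List.mem_singleton.1 ha]; exact hd
  refine (measure_mono (iUnion_subset fun _ => subset_rfl)).trans
    ((volume_image_cfBranch_le hw inter_subset_right).trans ?_)
  simpa [cfCoeffs, digitWeight] using mul_le_mul_right (measure_mono inter_subset_left) _

lemma volume_setOf_iterate_two_gaussMap_mem_le (G : ℕ → ℕ → Set ℝ) :
    volume {x | x ∈ gaussDomain ∧ gaussMap^[2] x ∈ G (cfA 1 x) (cfA 2 x)} ≤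
      ∑' d, ∑' e, digitWeight d * digitWeight e * volume (G d e) := by
  set G₁ : ℕ → Set ℝ := fun d => {y | y ∈ gaussDomain ∧ gaussMap y ∈ G d (cfA 1 y)}
  have hsub : {x | x ∈ gaussDomain ∧ gaussMap^[2] x ∈ G (cfA 1 x) (cfA 2 x)} ⊆
      {x | x ∈ gaussDomain ∧ gaussMap x ∈ G₁ (cfA 1 x)} := by
    rintro x ⟨hx, hG⟩
    rw [show cfA 2 x = cfA 1 (gaussMap x) from cfA_succ le_rfl x] at hG
    exact ⟨hx, gaussMap_mem hx, hG⟩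
  refine (measure_mono hsub).trans ((volume_setOf_gaussMap_mem_le G₁).trans ?_)
  simp_rw [mul_assoc, ENNReal.tsum_mul_left]
  exact ENNReal.tsum_le_tsum fun d => mul_le_mul_right (volume_setOf_gaussMap_mem_le _) _

lemma volume_setOf_iterate_three_gaussMap_mem_le (G : ℕ → ℕ → ℕ → Set ℝ) :
    volume {x | x ∈ gaussDomain ∧ gaussMap^[3] x ∈ G (cfA 1 x) (cfA 2 x) (cfA 3 x)} ≤
      ∑' d, ∑' e, ∑' f, digitWeight d * digitWeight e * digitWeight f * volume (G d e f) := by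
  set G₁ : ℕ → Set ℝ := fun d =>
    {y | y ∈ gaussDomain ∧ gaussMap^[2] y ∈ G d (cfA 1 y) (cfA 2 y)}
  have hsub : {x | x ∈ gaussDomain ∧ gaussMap^[3] x ∈ G (cfA 1 x) (cfA 2 x) (cfA 3 x)} ⊆
      {x | x ∈ gaussDomain ∧ gaussMap x ∈ G₁ (cfA 1 x)} := by
    rintro x ⟨hx, hG⟩
    rw [show cfA 2 x = cfA 1 (gaussMap x) from cfA_succ le_rfl x,
      show cfA 3 x = cfA 2 (gaussMap x) from cfA_succ (by norm_num) x] at hG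
    exact ⟨hx, gaussMap_mem hx, hG⟩
  refine (measure_mono hsub).trans ((volume_setOf_gaussMap_mem_le G₁).trans ?_)
  simp_rw [mul_assoc, ENNReal.tsum_mul_left]
  refine ENNReal.tsum_le_tsum fun d => mul_le_mul_right ?_ _
  simpa only [mul_assoc, ENNReal.tsum_mul_left] using volume_setOf_iterate_two_gaussMap_mem_le _

end DigitConditioning

section DigitSums

/-- `digitTail`, `digitTail₂` and `digitTail₃` bound the measures of `{a₁ ≥ s}`, `{a₁ a₂ ≥ s}`
and `{a₁ a₂ a₃ ≥ s}`, as if the partial quotients were independent with weights `1 / d²`. -/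
noncomputable def digitTail (s : ℝ) : ℝ≥0∞ := ∑' d : ℕ, if s ≤ d then digitWeight d else 0

noncomputable def digitTail₂ (s : ℝ) : ℝ≥0∞ := ∑' d : ℕ, digitWeight d * digitTail (s / d)

noncomputable def digitTail₃ (s : ℝ) : ℝ≥0∞ := ∑' d : ℕ, digitWeight d * digitTail₂ (s / d)

lemma digitTail_le {s : ℝ} (hs : 0 < s) : digitTail s ≤ ENNReal.ofReal (2 / s) := by
  refine ENNReal.tsum_le_of_sum_range_le fun N => ?_
  have hceil : 1 ≤ ⌈s⌉₊ := Nat.one_le_iff_ne_zero.2 (Nat.ceil_pos.2 hs).ne'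
  have hsub : (Finset.range N).filter (fun d : ℕ => s ≤ d) ⊆ Finset.Ioo (⌈s⌉₊ - 1) N :=
    fun d hd => by
      simp only [Finset.mem_filter, Finset.mem_range] at hd
      have := Nat.ceil_le.2 hd.2
      simp only [Finset.mem_Ioo]; omega
  calc ∑ d ∈ Finset.range N, (if s ≤ d then digitWeight d else 0)
      ≤ ∑ d ∈ Finset.Ioo (⌈s⌉₊ - 1) N, digitWeight d := by
        rw [← Finset.sum_filter]; exact Finset.sum_le_sum_of_subset hsub
    _ = ENNReal.ofReal (∑ d ∈ Finset.Ioo (⌈s⌉₊ - 1) N, ((d : ℝ) ^ 2)⁻¹) :=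
        (ENNReal.ofReal_sum_of_nonneg fun _ _ => by positivity).symm
    _ ≤ ENNReal.ofReal (2 / s) := by
        refine ENNReal.ofReal_le_ofReal ((sum_Ioo_inv_sq_le _ _).trans ?_)
        rw [Nat.cast_sub hceil, Nat.cast_one, sub_add_cancel]
        exact div_le_div_of_nonneg_left zero_le_two hs (Nat.le_ceil s)

lemma tsum_digitWeight_le_two : ∑' d, digitWeight d ≤ 2 := by
  have h : ∑' d, digitWeight d = digitTail 1 := by
    refine tsum_congr fun d => ?_
    rcases Nat.eq_zero_or_pos d with rfl | hd
    · simp [digitWeight_zero]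
    · rw [if_pos (by exact_mod_cast hd)]
  simpa [h] using digitTail_le zero_lt_one

lemma digitTail_le_two (s : ℝ) : digitTail s ≤ 2 :=
  (ENNReal.tsum_le_tsum fun d => by split_ifs <;> simp).trans tsum_digitWeight_le_two

lemma tsum_digitWeight_mul_le_two_mul {F : ℕ → ℝ≥0∞} {c : ℝ≥0∞} (hF : ∀ d, F d ≤ c) :
    ∑' d, digitWeight d * F d ≤ 2 * c :=
  calc ∑' d, digitWeight d * F d ≤ ∑' d, digitWeight d * c :=
        ENNReal.tsum_le_tsum fun d => mul_le_mul_right (hF d) _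
    _ ≤ 2 * c := by rw [ENNReal.tsum_mul_right]; gcongr; exact tsum_digitWeight_le_two

lemma tsum_ite_ofReal_inv_le {B : ℝ} (hB : 1 ≤ B) :
    ∑' d : ℕ, (if (d : ℝ) < B then ENNReal.ofReal (d : ℝ)⁻¹ else 0) ≤
      ENNReal.ofReal (1 + Real.log B) := by
  set n := ⌈B⌉₊ - 1
  have hn : (n : ℝ) < B := by
    have := Nat.ceil_lt_add_one (zero_le_one.trans hB)
    rw [Nat.cast_sub (Nat.one_le_iff_ne_zero.2 (Nat.ceil_pos.2 (by linarith)).ne')]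
    push_cast; linarith
  have hsum : ∑ d ∈ Finset.range (n + 1), (d : ℝ)⁻¹ = harmonic n := by
    simp [Finset.sum_range_succ', harmonic]
  have hlog : Real.log n ≤ Real.log B := by
    rcases Nat.eq_zero_or_pos n with h0 | hpos
    · simp [h0, Real.log_nonneg hB]
    · exact Real.log_le_log (by exact_mod_cast hpos) hn.le
  rw [tsum_eq_sum (s := Finset.range (n + 1)) fun d hd => if_neg fun h => hd (by
    rw [Finset.mem_range]; exact Nat.lt_ceil.2 h |>.trans_le (by omega))]
  calc ∑ d ∈ Finset.range (n + 1), (if (d : ℝ) < B then ENNReal.ofReal (d : ℝ)⁻¹ else 0)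
      ≤ ∑ d ∈ Finset.range (n + 1), ENNReal.ofReal (d : ℝ)⁻¹ :=
        Finset.sum_le_sum fun d _ => by split_ifs <;> simp
    _ = ENNReal.ofReal (harmonic n) := by
        rw [← hsum, ENNReal.ofReal_sum_of_nonneg fun _ _ => by positivity]
    _ ≤ ENNReal.ofReal (1 + Real.log B) :=
        ENNReal.ofReal_le_ofReal ((harmonic_le_one_add_log n).trans (by linarith))

lemma tsum_ite_le {t : ℝ} (ht : 0 ≤ t) (c : ℝ≥0∞) :
    ∑' d : ℕ, (if (d : ℝ) < t then c else 0) ≤ ENNReal.ofReal (t + 1) * c := by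
  rw [tsum_eq_sum (s := Finset.range ⌈t⌉₊) fun d hd => if_neg fun h => hd
    (Finset.mem_range.2 (Nat.lt_ceil.2 h))]
  calc ∑ d ∈ Finset.range ⌈t⌉₊, (if (d : ℝ) < t then c else 0)
      ≤ ∑ _d ∈ Finset.range ⌈t⌉₊, c := Finset.sum_le_sum fun d _ => by split_ifs <;> simp
    _ ≤ ENNReal.ofReal (t + 1) * c := by
        rw [Finset.sum_const, Finset.card_range, nsmul_eq_mul, ← ENNReal.ofReal_natCast]
        gcongr
        exact (Nat.ceil_lt_add_one ht).le

lemma tsum_digitWeight_mul_le_add {B C' : ℝ} (hB : 0 < B) (F g : ℕ → ℝ≥0∞)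
    (hlow : ∀ d : ℕ, 1 ≤ d → (d : ℝ) < B → digitWeight d * F d ≤ g d)
    (hhigh : ∀ d : ℕ, B ≤ d → F d ≤ ENNReal.ofReal C') :
    ∑' d, digitWeight d * F d ≤
      ∑' d : ℕ, (if (d : ℝ) < B then g d else 0) + ENNReal.ofReal C' * ENNReal.ofReal (2 / B) := by
  calc ∑' d, digitWeight d * F d
      ≤ ∑' d : ℕ, ((if (d : ℝ) < B then g d else 0) +
          ENNReal.ofReal C' * (if B ≤ d then digitWeight d else 0)) := by
        refine ENNReal.tsum_le_tsum fun d => ?_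
        rcases Nat.eq_zero_or_pos d with rfl | hd
        · simp [digitWeight_zero]
        by_cases hdB : (d : ℝ) < B
        · simp [hdB, not_le.2 hdB, hlow d hd hdB]
        · rw [not_lt] at hdB
          simpa [not_lt.2 hdB, hdB, mul_comm] using mul_le_mul_right (hhigh d hdB) (digitWeight d)
    _ ≤ _ := by
        rw [ENNReal.tsum_add, ENNReal.tsum_mul_left]
        gcongr
        exact digitTail_le hB

lemma tsum_digitWeight_mul_le_of_linear {B C C' : ℝ} (hB : 1 ≤ B) (hC : 0 ≤ C) (hC' : 0 ≤ C')
    (F : ℕ → ℝ≥0∞) (hlow : ∀ d : ℕ, 1 ≤ d → (d : ℝ) < B → F d ≤ ENNReal.ofReal (C * d / B))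
    (hhigh : ∀ d : ℕ, B ≤ d → F d ≤ ENNReal.ofReal C') :
    ∑' d, digitWeight d * F d ≤ ENNReal.ofReal ((C * (1 + Real.log B) + 2 * C') / B) := by
  have hB0 : 0 < B := by linarith
  have hlog := Real.log_nonneg hB
  refine (tsum_digitWeight_mul_le_add hB0 F (fun d => ENNReal.ofReal (C / B) *
    ENNReal.ofReal (d : ℝ)⁻¹) (fun d hd hdB => ?_) hhigh).trans ?_
  · have hd' : (0 : ℝ) < d := by exact_mod_cast hd
    rw [digitWeight, ← ENNReal.ofReal_mul (by positivity)]
    refine (mul_le_mul_right (hlow d hd hdB) _).trans ?_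
    rw [← ENNReal.ofReal_mul (by positivity)]
    exact ENNReal.ofReal_le_ofReal (le_of_eq (by field_simp))
  · have hite : ∀ d : ℕ,
        (if (d : ℝ) < B then ENNReal.ofReal (C / B) * ENNReal.ofReal (d : ℝ)⁻¹ else 0) =
          ENNReal.ofReal (C / B) * (if (d : ℝ) < B then ENNReal.ofReal (d : ℝ)⁻¹ else 0) :=
      fun d => by split_ifs <;> simp
    rw [tsum_congr hite, ENNReal.tsum_mul_left]
    calc _ ≤ ENNReal.ofReal (C / B) * ENNReal.ofReal (1 + Real.log B) +
          ENNReal.ofReal C' * ENNReal.ofReal (2 / B) := by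
          gcongr; exact tsum_ite_ofReal_inv_le hB
      _ = _ := by
          rw [← ENNReal.ofReal_mul (by positivity), ← ENNReal.ofReal_mul hC',
            ← ENNReal.ofReal_add (by positivity) (by positivity)]
          congr 1; field_simp

lemma tsum_digitWeight_mul_le_of_sq {t C C' : ℝ} (ht : 1 ≤ t) (hC : 0 ≤ C) (hC' : 0 ≤ C')
    (F : ℕ → ℝ≥0∞)
    (hlow : ∀ d : ℕ, 1 ≤ d → (d : ℝ) < t → F d ≤ ENNReal.ofReal (C * d ^ 2 / t ^ 2))
    (hhigh : ∀ d : ℕ, t ≤ d → F d ≤ ENNReal.ofReal C') :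
    ∑' d, digitWeight d * F d ≤ ENNReal.ofReal (2 * (C + C') / t) := by
  have ht0 : 0 < t := by linarith
  refine (tsum_digitWeight_mul_le_add ht0 F (fun _ => ENNReal.ofReal (C / t ^ 2))
      (fun d hd hdt => ?_) hhigh).trans ?_
  · have hd' : (0 : ℝ) < d := by exact_mod_cast hd
    refine (mul_le_mul_right (hlow d hd hdt) _).trans ?_
    rw [digitWeight, ← ENNReal.ofReal_mul (by positivity)]
    exact ENNReal.ofReal_le_ofReal (le_of_eq (by field_simp))
  · calc _ ≤ ENNReal.ofReal (t + 1) * ENNReal.ofReal (C / t ^ 2) +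
          ENNReal.ofReal C' * ENNReal.ofReal (2 / t) := by
          gcongr; exact tsum_ite_le ht0.le _
      _ ≤ _ := by
          rw [← ENNReal.ofReal_mul (by positivity), ← ENNReal.ofReal_mul hC',
            ← ENNReal.ofReal_add (by positivity) (by positivity)]
          refine ENNReal.ofReal_le_ofReal ?_
          have h : (t + 1) * (C / t ^ 2) ≤ 2 * C / t := by
            rw [mul_div_assoc', div_le_div_iff₀ (by positivity) ht0]
            nlinarith [mul_nonneg (mul_nonneg hC (sub_nonneg.2 ht)) ht0.le]
          linarith [show 2 * (C + C') / t = 2 * C / t + C' * (2 / t) by ring]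

lemma digitTail₂_le {s : ℝ} (hs : 1 ≤ s) :
    digitTail₂ s ≤ ENNReal.ofReal (2 * (3 + Real.log s) / s) := by
  refine (tsum_digitWeight_mul_le_of_linear hs zero_le_two zero_le_two _ (fun d hd _ => ?_)
    (fun d _ => by simpa using digitTail_le_two _)).trans (le_of_eq (by ring_nf))
  have hd' : (0 : ℝ) < d := by exact_mod_cast hd
  refine (digitTail_le (by positivity)).trans (le_of_eq ?_)
  rw [div_div_eq_mul_div]

lemma digitTail₂_le_four (s : ℝ) : digitTail₂ s ≤ 4 :=
  (tsum_digitWeight_mul_le_two_mul fun _ => digitTail_le_two _).trans (by norm_num)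

lemma digitTail₃_le {s : ℝ} (hs : 1 ≤ s) :
    digitTail₃ s ≤ ENNReal.ofReal (14 * (1 + Real.log s) ^ 2 / s) := by
  have hlog := Real.log_nonneg hs
  refine (tsum_digitWeight_mul_le_of_linear hs (C := 2 * (3 + Real.log s)) (by positivity)
    (by norm_num : (0 : ℝ) ≤ 4) _ (fun d hd hds => ?_)
    (fun d _ => by simpa using digitTail₂_le_four _)).trans ?_
  · have hd' : (1 : ℝ) ≤ d := by exact_mod_cast hd
    have hsd : 1 ≤ s / d := by rw [le_div_iff₀ (by positivity)]; linarith
    refine (digitTail₂_le hsd).trans (ENNReal.ofReal_le_ofReal ?_)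
    have : Real.log (s / d) ≤ Real.log s :=
      Real.log_le_log (by positivity) (div_le_self (by positivity) hd')
    rw [div_div_eq_mul_div]
    gcongr
  · refine ENNReal.ofReal_le_ofReal (div_le_div_of_nonneg_right ?_ (by positivity))
    nlinarith

lemma tsum_digitWeight_mul_digitTail_sq_le {t : ℝ} (ht : 1 ≤ t) :
    ∑' d, digitWeight d * digitTail (t / d) ^ 2 ≤ ENNReal.ofReal (16 / t) := by
  refine (tsum_digitWeight_mul_le_of_sq ht (C := 4) (C' := 4) (by norm_num) (by norm_num) _
    (fun d hd hdt => ?_) (fun d _ => ?_)).trans (le_of_eq (by norm_num))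
  · have hd' : (0 : ℝ) < d := by exact_mod_cast hd
    refine (pow_le_pow_left₀ zero_le (digitTail_le (by positivity)) 2).trans (le_of_eq ?_)
    rw [← ENNReal.ofReal_pow (by positivity)]
    congr 1; field_simp; ring
  · calc digitTail (t / d) ^ 2 ≤ 2 ^ 2 := pow_le_pow_left₀ zero_le (digitTail_le_two _) 2
      _ = ENNReal.ofReal 4 := by norm_num

lemma three_add_log_le_three_mul_sqrt {s : ℝ} (hs : 1 ≤ s) : 3 + Real.log s ≤ 3 * √s := by
  have hsqrt : 1 ≤ √s := Real.one_le_sqrt.2 hs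
  have hlog : Real.log s = 2 * Real.log √s := by
    rw [Real.log_sqrt (by linarith)]; ring
  linarith [Real.log_le_sub_one_of_pos (by linarith : 0 < √s)]

lemma digitTail₂_sq_le {s : ℝ} (hs : 1 ≤ s) : digitTail₂ s ^ 2 ≤ ENNReal.ofReal (36 / s) := by
  have hs0 : 0 < s := by linarith
  have hlog := Real.log_nonneg hs
  refine (pow_le_pow_left₀ zero_le (digitTail₂_le hs) 2).trans ?_
  rw [← ENNReal.ofReal_pow (by positivity)]
  refine ENNReal.ofReal_le_ofReal ?_
  have h := three_add_log_le_three_mul_sqrt hs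
  have hsq : √s ^ 2 = s := Real.sq_sqrt hs0.le
  rw [div_pow, div_le_div_iff₀ (by positivity) hs0]
  nlinarith [mul_le_mul h h (by positivity) (by positivity)]

end DigitSums

section DigitTailBounds

lemma volume_setOf_and_mem (p : Prop) [Decidable p] (A : Set ℝ) :
    volume {z | p ∧ z ∈ A} = if p then volume A else 0 := by
  split_ifs with hp <;> simp [hp]

lemma volume_setOf_le_cfA_le_digitTail (s : ℝ) :
    volume {x | x ∈ gaussDomain ∧ s ≤ cfA 1 x} ≤ digitTail s := by
  have hsub : {x | x ∈ gaussDomain ∧ s ≤ cfA 1 x} ⊆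
      {x | x ∈ gaussDomain ∧ gaussMap x ∈ {y | s ≤ cfA 1 x ∧ y ∈ Ioo 0 1}} :=
    fun x ⟨hx, hs⟩ => ⟨hx, hs, (gaussMap_mem hx).1⟩
  refine (measure_mono hsub).trans ((volume_setOf_gaussMap_mem_le
    fun d => {y | s ≤ d ∧ y ∈ Ioo 0 1}).trans (ENNReal.tsum_le_tsum fun d => ?_))
  rw [volume_setOf_and_mem]
  split_ifs <;> simp

lemma volume_setOf_le_cfA_mul_cfA_le_digitTail₂ (s : ℝ) :
    volume {x | x ∈ gaussDomain ∧ s ≤ (cfA 1 x : ℝ) * cfA 2 x} ≤ digitTail₂ s := by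
  have hsub : {x | x ∈ gaussDomain ∧ s ≤ (cfA 1 x : ℝ) * cfA 2 x} ⊆
      {x | x ∈ gaussDomain ∧ gaussMap x ∈ {y | y ∈ gaussDomain ∧ s / cfA 1 x ≤ cfA 1 y}} := by
    rintro x ⟨hx, hs⟩
    have ha : (0 : ℝ) < cfA 1 x := by exact_mod_cast one_le_cfA hx 1
    refine ⟨hx, gaussMap_mem hx, ?_⟩
    rwa [div_le_iff₀' ha, ← cfA_succ le_rfl]
  exact (measure_mono hsub).trans ((volume_setOf_gaussMap_mem_le
    fun d => {y | y ∈ gaussDomain ∧ s / d ≤ cfA 1 y}).trans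
      (ENNReal.tsum_le_tsum fun d => mul_le_mul_right (volume_setOf_le_cfA_le_digitTail _) _))

lemma tsum_digitWeight_mul_ite_eq (B : ℝ) (V : ℕ → ℕ → ℝ≥0∞) :
    ∑' d, ∑' e, ∑' f, digitWeight d * digitWeight e * digitWeight f *
        (if B ≤ (d : ℝ) * e * f then V e f else 0) =
      ∑' e, ∑' f, digitWeight e * digitWeight f * (digitTail (B / (e * f)) * V e f) := by
  rw [ENNReal.tsum_comm]
  refine tsum_congr fun e => ?_
  rw [ENNReal.tsum_comm]
  refine tsum_congr fun f => ?_
  rw [digitTail, ← ENNReal.tsum_mul_right, ← ENNReal.tsum_mul_left]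
  refine tsum_congr fun d => ?_
  rcases Nat.eq_zero_or_pos e with rfl | he
  · simp [digitWeight_zero]
  rcases Nat.eq_zero_or_pos f with rfl | hf
  · simp [digitWeight_zero]
  have hef : (0 : ℝ) < e * f := by positivity
  simp only [div_le_iff₀ hef, mul_assoc]
  split_ifs <;> ring

lemma tsum_tsum_digitWeight_mul_digitTail (B : ℝ) :
    ∑' e, ∑' f, digitWeight e * digitWeight f * digitTail (B / (e * f)) = digitTail₃ B := by
  simp_rw [digitTail₃, digitTail₂, ← ENNReal.tsum_mul_left, mul_assoc, div_div]

lemma volume_setOf_le_prod_three_and_mem_le (B : ℝ) (A : ℕ → ℕ → Set ℝ) :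
    volume {x | x ∈ gaussDomain ∧ B ≤ (cfA 1 x : ℝ) * cfA 2 x * cfA 3 x ∧
        gaussMap^[3] x ∈ A (cfA 2 x) (cfA 3 x)} ≤
      ∑' e, ∑' f, digitWeight e * digitWeight f * (digitTail (B / (e * f)) * volume (A e f)) := by
  rw [← tsum_digitWeight_mul_ite_eq]
  simp_rw [← volume_setOf_and_mem]
  exact volume_setOf_iterate_three_gaussMap_mem_le
    fun d e f => {z | B ≤ (d : ℝ) * e * f ∧ z ∈ A e f}

end DigitTailBounds

section Events

def cfEvent (ℓ : ℕ) (B : ℝ) (j : ℕ) : Set ℝ := {x | x ∈ gaussDomain ∧ B ≤ cfProd ℓ j x}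

lemma volume_cfEvent_inter_le_two_mul (ℓ : ℕ) (B : ℝ) {j k : ℕ} (hj : 1 ≤ j) (hjk : j ≤ k) :
    volume (cfEvent ℓ B j ∩ cfEvent ℓ B k) ≤
      2 * volume (cfEvent ℓ B 1 ∩ cfEvent ℓ B (k - j + 1)) := by
  have hsub : cfEvent ℓ B j ∩ cfEvent ℓ B k ⊆ {x | x ∈ gaussDomain ∧
      gaussMap^[j - 1] x ∈ cfEvent ℓ B 1 ∩ cfEvent ℓ B (k - j + 1)} := by
    rintro x ⟨⟨hx, hj'⟩, ⟨-, hk'⟩⟩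
    have hΩ := iterate_gaussMap_mem hx (j - 1)
    rw [← Nat.sub_add_cancel hj, cfProd_add _ _ le_rfl] at hj'
    rw [show k = j - 1 + (k - j + 1) by omega, cfProd_add _ _ (by omega)] at hk'
    exact ⟨hx, ⟨hΩ, hj'⟩, ⟨hΩ, hk'⟩⟩
  exact (measure_mono hsub).trans (volume_setOf_iterate_gaussMap_mem_le _ _)

variable {B : ℝ}

lemma volume_cfEvent_one_le (B : ℝ) : volume (cfEvent 3 B 1) ≤ digitTail₃ B := by
  have hsub : cfEvent 3 B 1 ⊆ {x | x ∈ gaussDomain ∧ B ≤ (cfA 1 x : ℝ) * cfA 2 x * cfA 3 x ∧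
      gaussMap^[3] x ∈ (fun _ _ => Ioo (0 : ℝ) 1) (cfA 2 x) (cfA 3 x)} := by
    rintro x ⟨hx, hB⟩
    exact ⟨hx, by simpa [cfProd_three] using hB, (iterate_gaussMap_mem hx 3).1⟩
  refine (measure_mono hsub).trans
    ((volume_setOf_le_prod_three_and_mem_le B fun _ _ => Ioo 0 1).trans (le_of_eq ?_))
  simp [← tsum_tsum_digitWeight_mul_digitTail B]

lemma volume_cfEvent_one_inter_two_le (hB : 1 ≤ B) :
    volume (cfEvent 3 B 1 ∩ cfEvent 3 B 2) ≤ ENNReal.ofReal (32 * (1 + Real.log B) / B) := by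
  set A : ℕ → ℕ → Set ℝ := fun e f => {z | z ∈ gaussDomain ∧ B / (e * f) ≤ cfA 1 z}
  have hsub : cfEvent 3 B 1 ∩ cfEvent 3 B 2 ⊆ {x | x ∈ gaussDomain ∧
      B ≤ (cfA 1 x : ℝ) * cfA 2 x * cfA 3 x ∧ gaussMap^[3] x ∈ A (cfA 2 x) (cfA 3 x)} := by
    rintro x ⟨⟨hx, h1⟩, ⟨-, h2⟩⟩
    have hpos : (0 : ℝ) < cfA 2 x * cfA 3 x := by
      have := one_le_cfA hx 2; have := one_le_cfA hx 3; positivity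
    have h4 : cfA 4 x = cfA 1 (gaussMap^[3] x) := cfA_add 3 le_rfl x
    simp only [cfProd_three] at h1 h2
    refine ⟨hx, by simpa using h1, iterate_gaussMap_mem hx 3, ?_⟩
    rw [div_le_iff₀ hpos, ← h4]
    exact h2.trans_eq (by ring)
  have hlog := Real.log_nonneg hB
  calc volume (cfEvent 3 B 1 ∩ cfEvent 3 B 2)
      ≤ ∑' e, ∑' f, digitWeight e * digitWeight f * (digitTail (B / (e * f)) * volume (A e f)) :=
        (measure_mono hsub).trans (volume_setOf_le_prod_three_and_mem_le B A)
    _ ≤ ∑' e, ∑' f, digitWeight e * digitWeight f * digitTail (B / e / f) ^ 2 := by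
        gcongr with e f
        rw [sq, div_div]
        exact mul_le_mul_right (volume_setOf_le_cfA_le_digitTail _) _
    _ = ∑' e, digitWeight e * ∑' f, digitWeight f * digitTail (B / e / f) ^ 2 := by
        simp_rw [mul_assoc, ENNReal.tsum_mul_left]
    _ ≤ ENNReal.ofReal ((16 * (1 + Real.log B) + 2 * 8) / B) := by
        refine tsum_digitWeight_mul_le_of_linear hB (by norm_num) (by norm_num) _
          (fun e he heB => ?_) (fun e _ => ?_)
        · have he' : (0 : ℝ) < e := by exact_mod_cast he
          refine (tsum_digitWeight_mul_digitTail_sq_le ?_).trans (le_of_eq ?_)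
          · rw [le_div_iff₀ he']; linarith
          · rw [div_div_eq_mul_div]
        · exact (tsum_digitWeight_mul_le_two_mul fun _ =>
            pow_le_pow_left₀ zero_le (digitTail_le_two _) 2).trans (by norm_num)
    _ ≤ ENNReal.ofReal (32 * (1 + Real.log B) / B) := by
        gcongr; linarith

lemma volume_cfEvent_one_inter_three_le (hB : 1 ≤ B) :
    volume (cfEvent 3 B 1 ∩ cfEvent 3 B 3) ≤ ENNReal.ofReal (68 * (1 + Real.log B) / B) := by
  set A : ℕ → ℕ → Set ℝ := fun _ f => {z | z ∈ gaussDomain ∧ B / f ≤ (cfA 1 z : ℝ) * cfA 2 z}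
  have hsub : cfEvent 3 B 1 ∩ cfEvent 3 B 3 ⊆ {x | x ∈ gaussDomain ∧
      B ≤ (cfA 1 x : ℝ) * cfA 2 x * cfA 3 x ∧ gaussMap^[3] x ∈ A (cfA 2 x) (cfA 3 x)} := by
    rintro x ⟨⟨hx, h1⟩, ⟨-, h3⟩⟩
    have hpos : (0 : ℝ) < cfA 3 x := by exact_mod_cast one_le_cfA hx 3
    have h4 : cfA 4 x = cfA 1 (gaussMap^[3] x) := cfA_add 3 le_rfl x
    have h5 : cfA 5 x = cfA 2 (gaussMap^[3] x) := cfA_add 3 (m := 2) (by norm_num) x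
    simp only [cfProd_three] at h1 h3
    refine ⟨hx, by simpa using h1, iterate_gaussMap_mem hx 3, ?_⟩
    rw [div_le_iff₀ hpos, ← h4, ← h5]
    exact h3.trans_eq (by ring)
  have hlog := Real.log_nonneg hB
  calc volume (cfEvent 3 B 1 ∩ cfEvent 3 B 3)
      ≤ ∑' e, ∑' f, digitWeight e * digitWeight f * (digitTail (B / (e * f)) * volume (A e f)) :=
        (measure_mono hsub).trans (volume_setOf_le_prod_three_and_mem_le B A)
    _ ≤ ∑' e, ∑' f,
          digitWeight e * digitWeight f * (digitTail (B / f / e) * digitTail₂ (B / f)) := by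
        gcongr with e f
        · rw [div_div, mul_comm]
        · exact volume_setOf_le_cfA_mul_cfA_le_digitTail₂ _
    _ = ∑' f, digitWeight f * digitTail₂ (B / f) ^ 2 := by
        rw [ENNReal.tsum_comm]
        refine tsum_congr fun f => ?_
        rw [sq]
        nth_rewrite 2 [digitTail₂]
        rw [← ENNReal.tsum_mul_right, ← ENNReal.tsum_mul_left]
        exact tsum_congr fun e => by ring
    _ ≤ ENNReal.ofReal ((36 * (1 + Real.log B) + 2 * 16) / B) := by
        refine tsum_digitWeight_mul_le_of_linear hB (by norm_num) (by norm_num) _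
          (fun f hf hfB => ?_) (fun f _ => ?_)
        · have hf' : (0 : ℝ) < f := by exact_mod_cast hf
          refine (digitTail₂_sq_le ?_).trans (le_of_eq ?_)
          · rw [le_div_iff₀ hf']; linarith
          · rw [div_div_eq_mul_div]
        · exact (pow_le_pow_left₀ zero_le (digitTail₂_le_four _) 2).trans (by norm_num)
    _ ≤ ENNReal.ofReal (68 * (1 + Real.log B) / B) := by
        gcongr; linarith

lemma volume_cfEvent_one_inter_le_of_four_le (hB : 1 ≤ B) {g : ℕ} (hg : 4 ≤ g) :
    volume (cfEvent 3 B 1 ∩ cfEvent 3 B g) ≤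
      ENNReal.ofReal (392 * (1 + Real.log B) ^ 4 / B ^ 2) := by
  set A : Set ℝ := {z | z ∈ gaussDomain ∧ gaussMap^[g - 4] z ∈ cfEvent 3 B 1}
  have hsub : cfEvent 3 B 1 ∩ cfEvent 3 B g ⊆ {x | x ∈ gaussDomain ∧
      B ≤ (cfA 1 x : ℝ) * cfA 2 x * cfA 3 x ∧
      gaussMap^[3] x ∈ (fun _ _ => A) (cfA 2 x) (cfA 3 x)} := by
    rintro x ⟨⟨hx, h1⟩, ⟨-, hg'⟩⟩
    have hshift : cfProd 3 g x = cfProd 3 1 (gaussMap^[g - 4] (gaussMap^[3] x)) := by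
      rw [← Function.iterate_add_apply, ← cfProd_add _ _ le_rfl]
      congr 1; omega
    simp only [cfProd_three] at h1
    refine ⟨hx, by simpa using h1, iterate_gaussMap_mem hx 3, ?_⟩
    exact ⟨iterate_gaussMap_mem (iterate_gaussMap_mem hx 3) _, hshift ▸ hg'⟩
  have hA : volume A ≤ 2 * digitTail₃ B :=
    (volume_setOf_iterate_gaussMap_mem_le _ _).trans
      (mul_le_mul_right (volume_cfEvent_one_le B) _)
  have h₃ := digitTail₃_le hB
  calc volume (cfEvent 3 B 1 ∩ cfEvent 3 B g)
      ≤ ∑' e, ∑' f, digitWeight e * digitWeight f * (digitTail (B / (e * f)) * volume A) :=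
        (measure_mono hsub).trans (volume_setOf_le_prod_three_and_mem_le B fun _ _ => A)
    _ = digitTail₃ B * volume A := by
        simp_rw [← mul_assoc, ENNReal.tsum_mul_right, tsum_tsum_digitWeight_mul_digitTail]
    _ ≤ ENNReal.ofReal (14 * (1 + Real.log B) ^ 2 / B) *
          (2 * ENNReal.ofReal (14 * (1 + Real.log B) ^ 2 / B)) := by
        gcongr; exact hA.trans (by gcongr)
    _ = ENNReal.ofReal (392 * (1 + Real.log B) ^ 4 / B ^ 2) := by
        rw [← ENNReal.ofReal_ofNat 2, ← ENNReal.ofReal_mul (by norm_num),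
          ← ENNReal.ofReal_mul (by positivity)]
        congr 1; ring

lemma volume_cfEvent_inter_le (hB : 1 ≤ B) {j k : ℕ} (hj : 1 ≤ j) (hjk : j < k) :
    volume (cfEvent 3 B j ∩ cfEvent 3 B k) ≤
      ENNReal.ofReal (784 * (1 + Real.log B) ^ 4 / B ^ 2) +
        if k ≤ j + 2 then ENNReal.ofReal (136 * (1 + Real.log B) / B) else 0 := by
  have hq : 0 ≤ (1 + Real.log B) / B := by have := Real.log_nonneg hB; positivity
  refine (volume_cfEvent_inter_le_two_mul 3 B hj hjk.le).trans ?_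
  rw [← ENNReal.ofReal_ofNat 2]
  rcases (show k - j + 1 = 2 ∨ k - j + 1 = 3 ∨ 4 ≤ k - j + 1 by omega) with hg | hg | hg
  · rw [hg, if_pos (by omega)]
    refine (mul_le_mul_right (volume_cfEvent_one_inter_two_le hB) _).trans ?_
    rw [← ENNReal.ofReal_mul zero_le_two]
    refine le_add_left (ENNReal.ofReal_le_ofReal ?_)
    linarith [show 2 * (32 * (1 + Real.log B) / B) = 64 * ((1 + Real.log B) / B) by ring,
      show 136 * (1 + Real.log B) / B = 136 * ((1 + Real.log B) / B) by ring]
  · rw [hg, if_pos (by omega)]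
    refine (mul_le_mul_right (volume_cfEvent_one_inter_three_le hB) _).trans ?_
    rw [← ENNReal.ofReal_mul zero_le_two]
    exact le_add_left (le_of_eq (by ring_nf))
  · refine (mul_le_mul_right (volume_cfEvent_one_inter_le_of_four_le hB hg) _).trans ?_
    rw [← ENNReal.ofReal_mul zero_le_two]
    exact le_add_right (le_of_eq (by ring_nf))

lemma volume_biUnion_cfEvent_inter_le (hB : 1 ≤ B) (k : ℕ) :
    volume (⋃ j ∈ Finset.Ico 1 k, cfEvent 3 B j ∩ cfEvent 3 B k) ≤
      ENNReal.ofReal (k * (784 * (1 + Real.log B) ^ 4 / B ^ 2) +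
        2 * (136 * (1 + Real.log B) / B)) := by
  have hlog := Real.log_nonneg hB
  have hnear : (Finset.Ico 1 k).filter (fun j => k ≤ j + 2) ⊆ Finset.Ico (k - 2) k :=
    fun j hj => by simp only [Finset.mem_filter, Finset.mem_Ico] at hj ⊢; omega
  calc volume (⋃ j ∈ Finset.Ico 1 k, cfEvent 3 B j ∩ cfEvent 3 B k)
      ≤ ∑ j ∈ Finset.Ico 1 k, (ENNReal.ofReal (784 * (1 + Real.log B) ^ 4 / B ^ 2) +
          if k ≤ j + 2 then ENNReal.ofReal (136 * (1 + Real.log B) / B) else 0) :=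
        (measure_biUnion_finset_le _ _).trans (Finset.sum_le_sum fun j hj =>
          volume_cfEvent_inter_le hB (Finset.mem_Ico.1 hj).1 (Finset.mem_Ico.1 hj).2)
    _ ≤ k * ENNReal.ofReal (784 * (1 + Real.log B) ^ 4 / B ^ 2) +
          2 * ENNReal.ofReal (136 * (1 + Real.log B) / B) := by
        rw [Finset.sum_add_distrib, Finset.sum_const, ← Finset.sum_filter, Finset.sum_const,
          nsmul_eq_mul, nsmul_eq_mul]
        gcongr
        · exact_mod_cast (Finset.card_le_card (Finset.Ico_subset_Ico_left zero_le_one)).trans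
            (by simp)
        · exact_mod_cast (Finset.card_le_card hnear).trans (by simp; omega)
    _ = _ := by
        rw [← ENNReal.ofReal_natCast, ← ENNReal.ofReal_ofNat 2,
          ← ENNReal.ofReal_mul (by positivity), ← ENNReal.ofReal_mul zero_le_two,
          ← ENNReal.ofReal_add (by positivity) (by positivity)]

lemma one_add_log_le_three_mul_log (hB : 2 ≤ B) : 1 + Real.log B ≤ 3 * Real.log B := by
  have := Real.log_le_log two_pos hB
  linarith [Real.log_two_gt_d9]

lemma volume_biUnion_cfEvent_inter_le_of_two_le (hB : 2 ≤ B) (k : ℕ) :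
    volume (⋃ j ∈ Finset.Ico 1 k, cfEvent 3 B j ∩ cfEvent 3 B k) ≤
      ENNReal.ofReal (63504 * (k * Real.log B ^ 4 / B ^ 2 + Real.log B / B)) := by
  have hL := one_add_log_le_three_mul_log hB
  have hlog := Real.log_nonneg (by linarith : (1 : ℝ) ≤ B)
  have hB0 : 0 < B := by linarith
  refine (volume_biUnion_cfEvent_inter_le (by linarith) k).trans (ENNReal.ofReal_le_ofReal ?_)
  have h4 : (1 + Real.log B) ^ 4 ≤ 81 * Real.log B ^ 4 :=
    calc (1 + Real.log B) ^ 4 ≤ (3 * Real.log B) ^ 4 := by gcongr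
      _ = 81 * Real.log B ^ 4 := by ring
  have e1 : k * (784 * (1 + Real.log B) ^ 4 / B ^ 2) ≤ 63504 * (k * Real.log B ^ 4 / B ^ 2) := by
    rw [mul_div_assoc', mul_div_assoc']
    exact div_le_div_of_nonneg_right (by nlinarith [k.cast_nonneg (α := ℝ)]) (by positivity)
  have e2 : 2 * (136 * (1 + Real.log B) / B) ≤ 63504 * (Real.log B / B) := by
    rw [mul_div_assoc', mul_div_assoc']
    exact div_le_div_of_nonneg_right (by nlinarith) hB0.le
  linarith

end Events

lemma Fset_subset_setOf_frequently (ℓ : ℕ) {φ : ℕ → ℝ} (hmono : Monotone φ)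
    (hunb : ∀ C, ∃ m, C < φ m) :
    Fset ℓ φ ⊆
      {x | ∃ᶠ k in atTop, x ∈ ⋃ j ∈ Finset.Ico 1 k, cfEvent ℓ (φ k) j ∩ cfEvent ℓ (φ k) k} := by
  rintro x ⟨hx01, hxirr, hxF⟩
  refine frequently_atTop.2 fun N => ?_
  obtain ⟨m, hm⟩ := hunb (∑ i ∈ Finset.range N, (cfProd ℓ i x : ℝ))
  obtain ⟨n, hn, j, k, hj, hjk, hkn, hPj, hPk⟩ := hxF (max N m)
  have hkN : N ≤ k := by
    by_contra! hk
    have hle : (cfProd ℓ k x : ℝ) ≤ ∑ i ∈ Finset.range N, (cfProd ℓ i x : ℝ) :=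
      Finset.single_le_sum (f := fun i => (cfProd ℓ i x : ℝ)) (fun i _ => Nat.cast_nonneg _)
        (Finset.mem_range.2 hk)
    linarith [hmono ((le_max_right N m).trans hn)]
  exact ⟨k, hkN, mem_biUnion (Finset.mem_Ico.2 ⟨hj, hjk⟩)
    ⟨⟨⟨hx01, hxirr⟩, (hmono hkn).trans hPj⟩, ⟨⟨hx01, hxirr⟩, (hmono hkn).trans hPk⟩⟩⟩

lemma exists_lt_of_summable_log_div {φ : ℕ → ℝ} (hφ : ∀ n, 2 ≤ φ n)
    (hsum : Summable fun n => Real.log (φ n) / φ n) (C : ℝ) : ∃ m, C < φ m := by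
  by_contra! hC
  have hpos : 0 < Real.log 2 / C := div_pos (Real.log_pos one_lt_two) (by linarith [hφ 0, hC 0])
  obtain ⟨n, hn⟩ := (hsum.tendsto_atTop_zero.eventually (gt_mem_nhds hpos)).exists
  exact hn.not_ge (div_le_div₀ (Real.log_nonneg (by linarith [hφ n]))
    (Real.log_le_log two_pos (hφ n)) (by linarith [hφ n]) (hC n))

/-- Convergence part for ℓ = 3: if ∑ (n·(log φ n)⁴/φ(n)² + log φ(n)/φ(n)) < ∞,
then F₃(φ) is Lebesgue-null. -/
theorem stmt_0 (φ : ℕ → ℝ) (hmono : Monotone φ) (hφ : ∀ n, 2 ≤ φ n)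
    (hsum : Summable fun n : ℕ =>
      (n : ℝ) * (Real.log (φ n)) ^ 4 / (φ n) ^ 2 + Real.log (φ n) / φ n) :
    volume (Fset 3 φ) = 0 := by
  have hlog : ∀ n, 0 ≤ Real.log (φ n) := fun n => Real.log_nonneg (by linarith [hφ n])
  have hφ0 : ∀ n, 0 < φ n := fun n => by linarith [hφ n]
  have hunb : ∀ C, ∃ m, C < φ m := exists_lt_of_summable_log_div hφ <|
    hsum.of_nonneg_of_le (fun n => div_nonneg (hlog n) (hφ0 n).le)
      fun n => le_add_of_nonneg_left (by have := hlog n; have := hφ0 n; positivity)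
  have hfin :
      ∑' k, volume (⋃ j ∈ Finset.Ico 1 k, cfEvent 3 (φ k) j ∩ cfEvent 3 (φ k) k) ≠ ⊤ := by
    refine ne_top_of_le_ne_top ?_
      (ENNReal.tsum_le_tsum fun k => volume_biUnion_cfEvent_inter_le_of_two_le (hφ k) k)
    rw [← ENNReal.ofReal_tsum_of_nonneg (fun k => by have := hlog k; have := hφ0 k; positivity)
      (hsum.mul_left _)]
    exact ENNReal.ofReal_ne_top
  exact measure_mono_null (Fset_subset_setOf_frequently 3 hmono hunb)
    (measure_setOfPred_frequently_eq_zero hfin)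
end

section
/- For every j ∈ ℕ with j ≥ 1 there exist constants c₁, c₂ > 0 and M₀ > 1, depending only on j, such that for all real M ≥ M₀: c₁·(log M)^{j−1}/M ≤ ∑ 1/(a²·b₁²·b₂²⋯b_j²·c²) ≤ c₂·(log M)^{j−1}/M, where the sum ranges over all tuples (a, b₁, …, b_j, c) of positive integers satisfying a·b₁·b₂⋯b_j ≥ M and b₁·b₂⋯b_j·c ≥ M. -/
open MeasureTheory Filter Set

/-- The series ∑ 1/(a²·b₁²⋯b_j²·c²) over positive integer tuples with
a·b₁⋯b_j ≥ M and b₁⋯b_j·c ≥ M. -/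
noncomputable def overlapSum (j : ℕ) (M : ℝ) : ℝ :=
  ∑' p : {p : ℕ × (Fin j → ℕ) × ℕ //
      0 < p.1 ∧ (∀ i, 0 < p.2.1 i) ∧ 0 < p.2.2 ∧
      M ≤ ((p.1 * ∏ i, p.2.1 i : ℕ) : ℝ) ∧
      M ≤ (((∏ i, p.2.1 i) * p.2.2 : ℕ) : ℝ)},
    (1 : ℝ) /
      ((p.1.1 : ℝ) ^ 2 * (∏ i, (p.1.2.1 i : ℝ) ^ 2) * (p.1.2.2 : ℝ) ^ 2)

/-!
Summing over `a` and `c` first, for fixed `b` with `B = b₁⋯b_j` each of the two sums is the tail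
`T (M / B) = ∑_{n ≥ M / B} n⁻²`, which is comparable to `min 1 (B / M)`. The series is therefore
`∑_b ∏ bᵢ⁻² · T (M / B)²`, the `j`-fold iterate of `g ↦ (M ↦ ∑_n n⁻² g (M / n))` applied to `T²`.
One application of this operator turns `g ≍ min 1 x⁻²` into `≍ 1 / M`, and `g ≍ (log x)^k / x`
into `≍ (log M)^(k+1) / M`: from below, sum over `n ≤ √M`, where `log (M / n) ≥ (log M) / 2` and
`∑ 1/n ≥ log √M`; from above, use the harmonic bound for `n ≤ M / M₀` and the boundedness of `g`
together with the tail estimate for larger `n`. Working in `ℝ≥0∞` makes all rearrangements free.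
-/

open scoped ENNReal
open Real

/-- `1 / n ^ 2`, which is `0` at `n = 0` because `0⁻¹ = 0` in `ℝ`; thus `n = 0` never contributes
to the sums below. -/
noncomputable def invSq (n : ℕ) : ℝ≥0∞ := ENNReal.ofReal ((n : ℝ) ^ 2)⁻¹

@[simp]
lemma invSq_zero : invSq 0 = 0 := by simp [invSq]

lemma invSq_ne_top (n : ℕ) : invSq n ≠ ∞ := ENNReal.ofReal_ne_top

lemma invSq_mul_ofReal (n : ℕ) (y : ℝ) :
    invSq n * ENNReal.ofReal y = ENNReal.ofReal (y / (n : ℝ) ^ 2) := by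
  rw [invSq, ← ENNReal.ofReal_mul (by positivity), div_eq_mul_inv, mul_comm]

noncomputable def invSqTail (x : ℝ) : ℝ≥0∞ := ∑' n : ℕ, if x ≤ n then invSq n else 0

noncomputable def invSqConv (g : ℝ → ℝ≥0∞) (M : ℝ) : ℝ≥0∞ := ∑' n : ℕ, invSq n * g (M / n)

lemma tsum_pi_invSq_mul_eq_iterate (g : ℝ → ℝ≥0∞) (j : ℕ) (M : ℝ) :
    ∑' b : Fin j → ℕ, (∏ i, invSq (b i)) * g (M / ∏ i, (b i : ℝ)) = invSqConv^[j] g M := by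
  induction j generalizing M with
  | zero => simp
  | succ j ih =>
    rw [Function.iterate_succ_apply', invSqConv, ← (Fin.consEquiv fun _ => ℕ).tsum_eq,
      ENNReal.tsum_prod']
    refine tsum_congr fun n => ?_
    rw [← ih, ← ENNReal.tsum_mul_left]
    refine tsum_congr fun t => ?_
    simp [Fin.consEquiv, Fin.prod_univ_succ, div_div, mul_assoc]

lemma tsum_subtype_eq_toReal_tsum_ite {α : Type*} (P : α → Prop) [DecidablePred P] {f : α → ℝ}
    {W : α → ℝ≥0∞} (hW : ∀ a, W a ≠ ∞) (hf : ∀ a, f a = (W a).toReal) :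
    ∑' a : {a // P a}, f a = (∑' a, if P a then W a else 0).toReal := by
  simp_rw [hf]
  rw [← ENNReal.tsum_toReal_eq fun a : {a // P a} => hW a]
  congr 1
  exact (tsum_subtype {a | P a} W).trans
    (tsum_congr fun a => by simp only [Set.indicator_apply, Set.mem_ofPred_eq])

lemma overlapSum_eq_toReal_tsum_ite (j : ℕ) {M : ℝ} (hM : 0 < M) :
    overlapSum j M = (∑' p : ℕ × (Fin j → ℕ) × ℕ,
      if M ≤ p.1 * ∏ i, (p.2.1 i : ℝ) ∧ M ≤ (∏ i, (p.2.1 i : ℝ)) * p.2.2 then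
        invSq p.1 * (∏ i, invSq (p.2.1 i)) * invSq p.2.2 else 0).toReal := by
  set W : ℕ × (Fin j → ℕ) × ℕ → ℝ≥0∞ := fun p => invSq p.1 * (∏ i, invSq (p.2.1 i)) * invSq p.2.2
  have hW : ∀ p, (W p).toReal = 1 / ((p.1 : ℝ) ^ 2 * (∏ i, (p.2.1 i : ℝ) ^ 2) * (p.2.2 : ℝ) ^ 2) :=
    fun p => by
      simp only [W, invSq, ENNReal.toReal_mul, ENNReal.toReal_prod]
      simp [Finset.prod_inv_distrib]
      ring
  have hW_ne_top : ∀ p, W p ≠ ∞ := fun p => by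
    simp only [W]
    exact ENNReal.mul_ne_top (ENNReal.mul_ne_top (invSq_ne_top _)
      (ENNReal.prod_ne_top fun i _ => invSq_ne_top _)) (invSq_ne_top _)
  have hP : ∀ p : ℕ × (Fin j → ℕ) × ℕ,
      (0 < p.1 ∧ (∀ i, 0 < p.2.1 i) ∧ 0 < p.2.2 ∧
        M ≤ ((p.1 * ∏ i, p.2.1 i : ℕ) : ℝ) ∧ M ≤ (((∏ i, p.2.1 i) * p.2.2 : ℕ) : ℝ))
      ↔ M ≤ p.1 * ∏ i, (p.2.1 i : ℝ) ∧ M ≤ (∏ i, (p.2.1 i : ℝ)) * p.2.2 := fun p => by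
    push_cast
    refine ⟨fun h => h.2.2.2, fun ⟨ha, hc⟩ => ⟨?_, fun i => ?_, ?_, ha, hc⟩⟩
    all_goals refine Nat.pos_of_ne_zero fun h0 => ?_
    · simp [h0] at ha; linarith
    · have : ∏ i, (p.2.1 i : ℝ) = 0 := Finset.prod_eq_zero (Finset.mem_univ i) (by simp [h0])
      rw [this, mul_zero] at ha; linarith
    · simp [h0] at hc; linarith
  rw [overlapSum, tsum_subtype_eq_toReal_tsum_ite _ hW_ne_top fun p => (hW p).symm]
  congr 1
  exact tsum_congr fun p => if_congr (hP p) rfl rfl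

lemma tsum_ite_le_mul_eq_invSqTail {B : ℝ} (hB : 0 < B) (M : ℝ) :
    ∑' a : ℕ, (if M ≤ a * B then invSq a else 0) = invSqTail (M / B) :=
  tsum_congr fun _ => if_congr (div_le_iff₀ hB).symm rfl rfl

lemma tsum_overlap_eq_tsum_mul_invSqTail_sq (j : ℕ) (M : ℝ) :
    (∑' p : ℕ × (Fin j → ℕ) × ℕ,
      if M ≤ p.1 * ∏ i, (p.2.1 i : ℝ) ∧ M ≤ (∏ i, (p.2.1 i : ℝ)) * p.2.2 then
        invSq p.1 * (∏ i, invSq (p.2.1 i)) * invSq p.2.2 else 0)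
      = ∑' b : Fin j → ℕ, (∏ i, invSq (b i)) * invSqTail (M / ∏ i, (b i : ℝ)) ^ 2 := by
  simp_rw [ENNReal.tsum_prod']
  rw [ENNReal.tsum_comm]
  refine tsum_congr fun b => ?_
  set B := ∏ i, (b i : ℝ)
  rcases (Finset.prod_nonneg fun i _ => (b i).cast_nonneg : 0 ≤ B).eq_or_lt with hB | hB
  · obtain ⟨i, -, hi⟩ := Finset.prod_eq_zero_iff.mp hB.symm
    have hW : ∏ i, invSq (b i) = 0 :=
      Finset.prod_eq_zero (Finset.mem_univ i) (by simp [Nat.cast_eq_zero.mp hi])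
    simp [hW]
  · have hsplit : ∀ a c : ℕ,
        (if M ≤ a * B ∧ M ≤ B * c then invSq a * (∏ i, invSq (b i)) * invSq c else 0)
          = (∏ i, invSq (b i)) * (if M ≤ a * B then invSq a else 0)
            * (if M ≤ c * B then invSq c else 0) := fun a c => by
      rw [mul_comm B]
      by_cases h₁ : M ≤ a * B <;> by_cases h₂ : M ≤ c * B <;> simp [h₁, h₂, mul_comm, mul_left_comm]
    simp_rw [hsplit, ENNReal.tsum_mul_left, ENNReal.tsum_mul_right, ENNReal.tsum_mul_left,
      tsum_ite_le_mul_eq_invSqTail (B := B) hB]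
    ring

lemma overlapSum_eq_toReal_iterate_invSqConv (j : ℕ) {M : ℝ} (hM : 0 < M) :
    overlapSum j M = (invSqConv^[j] (invSqTail · ^ 2) M).toReal := by
  rw [overlapSum_eq_toReal_tsum_ite j hM, tsum_overlap_eq_tsum_mul_invSqTail_sq,
    ← tsum_pi_invSq_mul_eq_iterate (invSqTail · ^ 2)]

lemma invSqTail_natCeil (x : ℝ) : invSqTail ⌈x⌉₊ = invSqTail x := by
  simp only [invSqTail, Nat.cast_le, Nat.ceil_le]

lemma invSqTail_nat_le {n : ℕ} (hn : 1 ≤ n) : invSqTail n ≤ ENNReal.ofReal (2 / n) := by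
  refine ENNReal.tsum_le_of_sum_range_le fun m => ?_
  have hsum : ∑ a ∈ Finset.range m, (if (n : ℝ) ≤ a then invSq a else 0)
      = ∑ a ∈ Finset.Ioo (n - 1) m, invSq a := by
    rw [← Finset.sum_filter]
    congr 1
    ext a
    simp only [Finset.mem_filter, Finset.mem_range, Finset.mem_Ioo, Nat.cast_le]
    omega
  rw [hsum]
  simp only [invSq]
  rw [← ENNReal.ofReal_sum_of_nonneg fun _ _ => by positivity]
  refine ENNReal.ofReal_le_ofReal ((sum_Ioo_inv_sq_le (n - 1) m).trans_eq ?_)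
  rw [Nat.cast_sub hn, Nat.cast_one, sub_add_cancel]

lemma le_invSqTail_nat {n : ℕ} (hn : 1 ≤ n) : ENNReal.ofReal (1 / (4 * n)) ≤ invSqTail n := by
  have hn' : (0 : ℝ) < n := by exact_mod_cast hn
  calc ENNReal.ofReal (1 / (4 * n))
      = ∑ a ∈ Finset.Ico n (2 * n), ENNReal.ofReal (((2 * n : ℕ) : ℝ) ^ 2)⁻¹ := by
        rw [Finset.sum_const, Nat.card_Ico, nsmul_eq_mul, ← ENNReal.ofReal_natCast,
          ← ENNReal.ofReal_mul (by positivity)]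
        congr 1
        push_cast [two_mul, Nat.add_sub_cancel]
        field_simp
        ring
    _ ≤ ∑ a ∈ Finset.Ico n (2 * n), invSq a := by
        refine Finset.sum_le_sum fun a ha => ENNReal.ofReal_le_ofReal ?_
        have ha := Finset.mem_Ico.mp ha
        have : (0 : ℝ) < a := by exact_mod_cast hn.trans ha.1
        gcongr
        exact_mod_cast ha.2.le
    _ ≤ invSqTail n := by
        rw [invSqTail]
        refine le_trans (le_of_eq ?_) (ENNReal.sum_le_tsum (Finset.Ico n (2 * n)))
        refine Finset.sum_congr rfl fun a ha => ?_
        rw [if_pos (by exact_mod_cast (Finset.mem_Ico.mp ha).1)]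

lemma invSqTail_one_eq_tsum : invSqTail 1 = ∑' n, invSq n := by
  refine tsum_congr fun n => ?_
  rcases Nat.eq_zero_or_pos n with rfl | hn
  · simp
  · rw [if_pos (by exact_mod_cast hn)]

lemma invSqTail_le_two (x : ℝ) : invSqTail x ≤ 2 :=
  calc invSqTail x ≤ ∑' n, invSq n := ENNReal.tsum_le_tsum fun n => by split_ifs <;> simp
    _ = invSqTail (1 : ℕ) := by rw [Nat.cast_one, invSqTail_one_eq_tsum]
    _ ≤ 2 := (invSqTail_nat_le le_rfl).trans (by norm_num)

lemma invSqTail_le {x : ℝ} (hx : 0 < x) : invSqTail x ≤ ENNReal.ofReal (2 / x) := by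
  have hc : 1 ≤ ⌈x⌉₊ := Nat.one_le_iff_ne_zero.mpr (Nat.ceil_pos.mpr hx).ne'
  rw [← invSqTail_natCeil]
  exact (invSqTail_nat_le hc).trans (ENNReal.ofReal_le_ofReal (by gcongr; exact Nat.le_ceil x))

lemma le_invSqTail {x : ℝ} (hx : 1 ≤ x) : ENNReal.ofReal (1 / (8 * x)) ≤ invSqTail x := by
  have hc : 1 ≤ ⌈x⌉₊ := Nat.one_le_iff_ne_zero.mpr (Nat.ceil_pos.mpr (by linarith)).ne'
  rw [← invSqTail_natCeil]
  refine le_trans (ENNReal.ofReal_le_ofReal ?_) (le_invSqTail_nat hc)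
  have hceil : (⌈x⌉₊ : ℝ) < x + 1 := Nat.ceil_lt_add_one (by linarith)
  have hc' : (1 : ℝ) ≤ ⌈x⌉₊ := by exact_mod_cast hc
  rw [div_le_div_iff₀ (by positivity) (by positivity)]
  linarith

lemma one_le_invSqTail {x : ℝ} (hx : x ≤ 1) : 1 ≤ invSqTail x := by
  refine le_trans (le_of_eq ?_) (ENNReal.le_tsum 1)
  simp [hx, invSq]

lemma invSqTail_sq_le (x : ℝ) : invSqTail x ^ 2 ≤ 4 := by
  calc invSqTail x ^ 2 ≤ 2 ^ 2 := by gcongr; exact invSqTail_le_two x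
    _ = 4 := by norm_num

lemma invSqConv_le {g : ℝ → ℝ≥0∞} {C : ℝ≥0∞} (hg : ∀ x, g x ≤ C) (M : ℝ) :
    invSqConv g M ≤ 2 * C :=
  calc invSqConv g M ≤ ∑' n, invSq n * C := ENNReal.tsum_le_tsum fun n => by gcongr; exact hg _
    _ = (∑' n, invSq n) * C := ENNReal.tsum_mul_right
    _ ≤ 2 * C := by
        gcongr
        rw [← invSqTail_one_eq_tsum]
        exact invSqTail_le_two 1

lemma iterate_invSqConv_le {g : ℝ → ℝ≥0∞} {C : ℝ≥0∞} (hg : ∀ x, g x ≤ C) (j : ℕ) (M : ℝ) :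
    invSqConv^[j] g M ≤ 2 ^ j * C := by
  induction j generalizing M with
  | zero => simpa using hg M
  | succ j ih =>
    rw [Function.iterate_succ_apply', pow_succ', mul_assoc]
    exact invSqConv_le ih M

lemma invSq_mul_ofReal_div_div (n : ℕ) (y M : ℝ) :
    invSq n * ENNReal.ofReal (y / (M / n)) = ENNReal.ofReal (y / M / n) := by
  rw [invSq_mul_ofReal]
  rcases Nat.eq_zero_or_pos n with rfl | hn
  · simp
  · have : (n : ℝ) ≠ 0 := by positivity
    congr 1
    field_simp

lemma tsum_ite_natCast_le {X : ℝ} (hX : 0 ≤ X) (f : ℕ → ℝ≥0∞) :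
    ∑' n : ℕ, (if (n : ℝ) ≤ X then f n else 0) = ∑ n ∈ Finset.range (⌊X⌋₊ + 1), f n := by
  have hmem : ∀ n : ℕ, n ∈ Finset.range (⌊X⌋₊ + 1) ↔ (n : ℝ) ≤ X := fun n => by
    rw [Finset.mem_range, Nat.lt_succ_iff, Nat.le_floor_iff hX]
  rw [tsum_eq_sum (s := Finset.range (⌊X⌋₊ + 1)) fun n hn => if_neg (mt (hmem n).mpr hn)]
  exact Finset.sum_congr rfl fun n hn => if_pos ((hmem n).mp hn)

lemma sum_range_ofReal_div_natCast {A : ℝ} (hA : 0 ≤ A) (K : ℕ) :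
    ∑ n ∈ Finset.range (K + 1), ENNReal.ofReal (A / n) = ENNReal.ofReal (A * harmonic K) := by
  rw [Finset.sum_range_succ', Nat.cast_zero, div_zero, ENNReal.ofReal_zero, add_zero,
    ← ENNReal.ofReal_sum_of_nonneg fun _ _ => by positivity, harmonic, Rat.cast_sum,
    Finset.mul_sum]
  simp [div_eq_mul_inv]

lemma invSqConv_le_sum_add_mul_invSqTail {g : ℝ → ℝ≥0∞} {M X : ℝ} (hX : 0 ≤ X)
    {f : ℕ → ℝ≥0∞} {C : ℝ≥0∞} (hsmall : ∀ n : ℕ, 0 < n → (n : ℝ) ≤ X → invSq n * g (M / n) ≤ f n)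
    (hC : ∀ x, g x ≤ C) :
    invSqConv g M ≤ ∑ n ∈ Finset.range (⌊X⌋₊ + 1), f n + C * invSqTail X := by
  have hterm : ∀ n : ℕ, invSq n * g (M / n) ≤
      (if (n : ℝ) ≤ X then f n else 0) + C * (if X ≤ n then invSq n else 0) := fun n => by
    rcases Nat.eq_zero_or_pos n with rfl | hn
    · simp
    by_cases hnX : (n : ℝ) ≤ X
    · rw [if_pos hnX]
      exact le_add_right (hsmall n hn hnX)
    · rw [if_neg hnX, if_pos (not_le.mp hnX).le, zero_add, mul_comm]
      gcongr
      exact hC _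
  calc invSqConv g M
      ≤ ∑' n : ℕ, ((if (n : ℝ) ≤ X then f n else 0) + C * (if X ≤ n then invSq n else 0)) :=
        ENNReal.tsum_le_tsum hterm
    _ = _ := by rw [ENNReal.tsum_add, ENNReal.tsum_mul_left, tsum_ite_natCast_le hX]; rfl

def HasLogPowLowerBound (g : ℝ → ℝ≥0∞) (k : ℕ) : Prop :=
  ∃ a > 0, ∀ᶠ M in atTop, ENNReal.ofReal (a * log M ^ k / M) ≤ g M

def HasLogPowUpperBound (g : ℝ → ℝ≥0∞) (k : ℕ) : Prop :=
  ∃ b > 0, ∀ᶠ M in atTop, g M ≤ ENNReal.ofReal (b * log M ^ k / M)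

lemma hasLogPowLowerBound_invSqConv_zero {g : ℝ → ℝ≥0∞} {c : ℝ} (hc : 0 < c)
    (hg : ∀ x, 0 < x → x ≤ 1 → ENNReal.ofReal c ≤ g x) :
    HasLogPowLowerBound (invSqConv g) 0 := by
  refine ⟨c / 8, by positivity, ?_⟩
  filter_upwards [eventually_ge_atTop 1] with M hM
  calc ENNReal.ofReal (c / 8 * log M ^ 0 / M)
      = ENNReal.ofReal c * ENNReal.ofReal (1 / (8 * M)) := by
        rw [← ENNReal.ofReal_mul hc.le]
        congr 1
        ring
    _ ≤ ENNReal.ofReal c * invSqTail M := by gcongr; exact le_invSqTail hM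
    _ = ∑' n : ℕ, if M ≤ n then ENNReal.ofReal c * invSq n else 0 := by
        rw [invSqTail, ← ENNReal.tsum_mul_left]
        simp only [mul_ite, mul_zero]
    _ ≤ invSqConv g M := ENNReal.tsum_le_tsum fun n => by
        split_ifs with hn
        · have hn0 : (0 : ℝ) < n := by linarith
          rw [mul_comm]
          gcongr
          exact hg _ (by positivity) ((div_le_one hn0).mpr hn)
        · exact zero_le

lemma hasLogPowUpperBound_invSqConv_zero {g : ℝ → ℝ≥0∞} {C : ℝ} (hC : 0 < C)
    (hg : ∀ x, 0 < x → g x ≤ ENNReal.ofReal (C / x ^ 2)) (hgC : ∀ x, g x ≤ ENNReal.ofReal C) :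
    HasLogPowUpperBound (invSqConv g) 0 := by
  refine ⟨4 * C, by positivity, ?_⟩
  filter_upwards [eventually_ge_atTop 1] with M hM
  have hM0 : 0 < M := by linarith
  have hsmall : ∀ n : ℕ, 0 < n → (n : ℝ) ≤ M →
      invSq n * g (M / n) ≤ ENNReal.ofReal (C / M ^ 2) := fun n hn _ => by
    have hn0 : (n : ℝ) ≠ 0 := by positivity
    calc invSq n * g (M / n) ≤ invSq n * ENNReal.ofReal (C / (M / n) ^ 2) := by
          gcongr
          exact hg _ (by positivity)
      _ = ENNReal.ofReal (C / M ^ 2) := by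
          rw [invSq_mul_ofReal]
          congr 1
          field_simp
  have hfloor : ((⌊M⌋₊ + 1 : ℕ) : ℝ≥0∞) ≤ ENNReal.ofReal (M + 1) := by
    rw [← ENNReal.ofReal_natCast]
    exact ENNReal.ofReal_le_ofReal (by push_cast; linarith [Nat.floor_le hM0.le])
  calc invSqConv g M
      ≤ ∑ n ∈ Finset.range (⌊M⌋₊ + 1), ENNReal.ofReal (C / M ^ 2)
          + ENNReal.ofReal C * invSqTail M :=
        invSqConv_le_sum_add_mul_invSqTail hM0.le hsmall hgC
    _ ≤ ENNReal.ofReal ((M + 1) * (C / M ^ 2)) + ENNReal.ofReal C * ENNReal.ofReal (2 / M) := by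
        rw [Finset.sum_const, Finset.card_range, nsmul_eq_mul, ENNReal.ofReal_mul (by positivity)]
        gcongr
        exact invSqTail_le hM0
    _ ≤ ENNReal.ofReal (4 * C * log M ^ 0 / M) := by
        rw [← ENNReal.ofReal_mul hC.le, ← ENNReal.ofReal_add (by positivity) (by positivity)]
        refine ENNReal.ofReal_le_ofReal ?_
        have h₁ : (M + 1) * (C / M ^ 2) ≤ 2 * C / M := by
          rw [mul_div_assoc', div_le_div_iff₀ (by positivity) hM0]
          nlinarith [mul_nonneg (sub_nonneg.mpr hM) (mul_pos hC hM0).le]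
        have h₂ : C * (2 / M) = 2 * C / M := by ring
        have h₃ : 4 * C * log M ^ 0 / M = 2 * C / M + 2 * C / M := by ring
        linarith

lemma le_invSq_mul_apply_div {g : ℝ → ℝ≥0∞} {a M₀ M : ℝ} {k n : ℕ}
    (hg : ∀ x, M₀ ≤ x → ENNReal.ofReal (a * log x ^ k / x) ≤ g x) (ha : 0 ≤ a)
    (hM₀ : M₀ ≤ √M) (hM : 1 ≤ M) (hn : 0 < n) (hnM : (n : ℝ) ≤ √M) :
    ENNReal.ofReal (a * (log M / 2) ^ k / M / n) ≤ invSq n * g (M / n) := by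
  have hn0 : (0 : ℝ) < n := by exact_mod_cast hn
  have hM0 : 0 < M := by linarith
  have hMn : √M ≤ M / n := by
    rw [le_div_iff₀ hn0]
    calc √M * n ≤ √M * √M := by gcongr
      _ = M := Real.mul_self_sqrt hM0.le
  have hlog : log M / 2 ≤ log (M / n) := by
    rw [← Real.log_sqrt hM0.le]
    exact Real.log_le_log (by positivity) hMn
  have hlog0 : 0 ≤ log M / 2 := by have := Real.log_nonneg hM; positivity
  calc ENNReal.ofReal (a * (log M / 2) ^ k / M / n)
      = invSq n * ENNReal.ofReal (a * (log M / 2) ^ k / (M / n)) :=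
        (invSq_mul_ofReal_div_div n _ _).symm
    _ ≤ invSq n * ENNReal.ofReal (a * log (M / n) ^ k / (M / n)) := by gcongr
    _ ≤ invSq n * g (M / n) := by gcongr; exact hg _ (hM₀.trans hMn)

lemma hasLogPowLowerBound_invSqConv_succ {g : ℝ → ℝ≥0∞} {k : ℕ} (hg : HasLogPowLowerBound g k) :
    HasLogPowLowerBound (invSqConv g) (k + 1) := by
  obtain ⟨a, ha, hg⟩ := hg
  obtain ⟨M₀, hM₀⟩ := eventually_atTop.mp hg
  refine ⟨a / 2 ^ (k + 1), by positivity, ?_⟩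
  filter_upwards [eventually_ge_atTop (max M₀ 1 ^ 2)] with M hM
  have hsqrt : max M₀ 1 ≤ √M := Real.le_sqrt_of_sq_le hM
  have hM1 : 1 ≤ M := by nlinarith [le_max_right M₀ 1]
  have hM0 : 0 < M := by linarith
  have hA : 0 ≤ a * (log M / 2) ^ k / M := by have := Real.log_nonneg hM1; positivity
  calc ENNReal.ofReal (a / 2 ^ (k + 1) * log M ^ (k + 1) / M)
      = ENNReal.ofReal (a * (log M / 2) ^ k / M * log √M) := by
        rw [Real.log_sqrt hM0.le, div_pow, pow_succ, pow_succ]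
        congr 1
        field_simp
    _ ≤ ENNReal.ofReal (a * (log M / 2) ^ k / M * harmonic ⌊√M⌋₊) := by
        gcongr
        exact log_le_harmonic_floor _ (Real.sqrt_nonneg M)
    _ = ∑ n ∈ Finset.range (⌊√M⌋₊ + 1), ENNReal.ofReal (a * (log M / 2) ^ k / M / n) :=
        (sum_range_ofReal_div_natCast hA _).symm
    _ ≤ ∑ n ∈ Finset.range (⌊√M⌋₊ + 1), invSq n * g (M / n) := by
        refine Finset.sum_le_sum fun n hn => ?_
        rcases Nat.eq_zero_or_pos n with rfl | hn0
        · simp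
        have hnM : (n : ℝ) ≤ √M := by
          have := Nat.lt_succ_iff.mp (Finset.mem_range.mp hn)
          exact (Nat.le_floor_iff (Real.sqrt_nonneg M)).mp this
        exact le_invSq_mul_apply_div hM₀ ha.le ((le_max_left _ _).trans hsqrt) hM1 hn0 hnM
    _ ≤ invSqConv g M := ENNReal.sum_le_tsum _

lemma invSq_mul_apply_div_le {g : ℝ → ℝ≥0∞} {b M₀ M : ℝ} {k n : ℕ}
    (hg : ∀ x, M₀ ≤ x → g x ≤ ENNReal.ofReal (b * log x ^ k / x)) (hb : 0 ≤ b) (hM₀ : 1 ≤ M₀)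
    (hn : 0 < n) (hnM : (n : ℝ) * M₀ ≤ M) :
    invSq n * g (M / n) ≤ ENNReal.ofReal (b * log M ^ k / M / n) := by
  have hn0 : (0 : ℝ) < n := by exact_mod_cast hn
  have hMn : M₀ ≤ M / n := by rw [le_div_iff₀ hn0]; linarith
  have hM0 : 0 < M := by nlinarith
  calc invSq n * g (M / n) ≤ invSq n * ENNReal.ofReal (b * log (M / n) ^ k / (M / n)) := by
        gcongr
        exact hg _ hMn
    _ ≤ invSq n * ENNReal.ofReal (b * log M ^ k / (M / n)) := by
        gcongr
        · exact Real.log_nonneg (hM₀.trans hMn)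
        · exact div_le_self hM0.le (by exact_mod_cast hn)
    _ = ENNReal.ofReal (b * log M ^ k / M / n) := invSq_mul_ofReal_div_div n _ _

lemma harmonic_floor_div_le_two_mul_log {M₁ M : ℝ} (hM₁ : 1 ≤ M₁) (hM : M₁ ≤ M)
    (hlog : 1 ≤ log M) : (harmonic ⌊M / M₁⌋₊ : ℝ) ≤ 2 * log M := by
  have hM0 : 0 < M := by linarith
  have hX1 : 1 ≤ M / M₁ := by rwa [le_div_iff₀ (by positivity), one_mul]
  calc (harmonic ⌊M / M₁⌋₊ : ℝ) ≤ 1 + log (M / M₁) := harmonic_floor_le_one_add_log _ hX1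
    _ ≤ 1 + log M := by gcongr; exact div_le_self hM0.le hM₁
    _ ≤ 2 * log M := by linarith

lemma hasLogPowUpperBound_invSqConv_succ {g : ℝ → ℝ≥0∞} {k : ℕ} (hg : HasLogPowUpperBound g k)
    {C : ℝ} (hC : 0 ≤ C) (hgC : ∀ x, g x ≤ ENNReal.ofReal C) :
    HasLogPowUpperBound (invSqConv g) (k + 1) := by
  obtain ⟨b, hb, hg⟩ := hg
  obtain ⟨M₀, hM₀⟩ := eventually_atTop.mp hg
  set M₁ := max M₀ 1
  have hM₁ : 1 ≤ M₁ := le_max_right _ _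
  refine ⟨2 * b + 2 * C * M₁, by positivity, ?_⟩
  filter_upwards [eventually_ge_atTop (max M₁ 3)] with M hM
  have hM0 : 0 < M := by linarith [le_max_right M₁ 3]
  have hlog : 1 ≤ log M := by
    rw [Real.le_log_iff_exp_le hM0]
    linarith [Real.exp_one_lt_d9, le_max_right M₁ 3]
  have hsmall : ∀ n : ℕ, 0 < n → (n : ℝ) ≤ M / M₁ →
      invSq n * g (M / n) ≤ ENNReal.ofReal (b * log M ^ k / M / n) := fun n hn hnM =>
    invSq_mul_apply_div_le (fun x hx => hM₀ x ((le_max_left _ _).trans hx)) hb.le hM₁ hn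
      ((le_div_iff₀ (by positivity)).mp hnM)
  calc invSqConv g M
      ≤ ∑ n ∈ Finset.range (⌊M / M₁⌋₊ + 1), ENNReal.ofReal (b * log M ^ k / M / n)
          + ENNReal.ofReal C * invSqTail (M / M₁) :=
        invSqConv_le_sum_add_mul_invSqTail (by positivity) hsmall hgC
    _ ≤ ENNReal.ofReal (b * log M ^ k / M * (2 * log M))
          + ENNReal.ofReal C * ENNReal.ofReal (2 / (M / M₁)) := by
        rw [sum_range_ofReal_div_natCast (by positivity)]
        gcongr
        · exact harmonic_floor_div_le_two_mul_log hM₁ ((le_max_left _ _).trans hM) hlog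
        · exact invSqTail_le (by positivity)
    _ ≤ ENNReal.ofReal ((2 * b + 2 * C * M₁) * log M ^ (k + 1) / M) := by
        rw [← ENNReal.ofReal_mul hC, ← ENNReal.ofReal_add (by positivity) (by positivity)]
        refine ENNReal.ofReal_le_ofReal ?_
        have h₁ : 2 * C * M₁ / M ≤ 2 * C * M₁ / M * log M ^ (k + 1) :=
          le_mul_of_one_le_right (by positivity) (one_le_pow₀ hlog)
        have h₂ : b * log M ^ k / M * (2 * log M) + C * (2 / (M / M₁))
            = 2 * b * log M ^ (k + 1) / M + 2 * C * M₁ / M := by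
          field_simp
          ring
        have h₃ : (2 * b + 2 * C * M₁) * log M ^ (k + 1) / M
            = 2 * b * log M ^ (k + 1) / M + 2 * C * M₁ / M * log M ^ (k + 1) := by ring
        linarith

lemma hasLogPowLowerBound_iterate_invSqConv (k : ℕ) :
    HasLogPowLowerBound (invSqConv^[k + 1] (invSqTail · ^ 2)) k := by
  induction k with
  | zero =>
    rw [zero_add, Function.iterate_one]
    refine hasLogPowLowerBound_invSqConv_zero one_pos fun x _ hx => ?_
    rw [ENNReal.ofReal_one]
    exact one_le_pow₀ (one_le_invSqTail hx)
  | succ k ih =>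
    rw [Function.iterate_succ_apply']
    exact hasLogPowLowerBound_invSqConv_succ ih

lemma hasLogPowUpperBound_iterate_invSqConv (k : ℕ) :
    HasLogPowUpperBound (invSqConv^[k + 1] (invSqTail · ^ 2)) k := by
  induction k with
  | zero =>
    rw [zero_add, Function.iterate_one]
    refine hasLogPowUpperBound_invSqConv_zero (C := 4) (by norm_num) (fun x hx => ?_) fun x => ?_
    · calc invSqTail x ^ 2 ≤ ENNReal.ofReal (2 / x) ^ 2 := by gcongr; exact invSqTail_le hx
        _ = ENNReal.ofReal (4 / x ^ 2) := by rw [← ENNReal.ofReal_pow (by positivity)]; ring_nf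
    · simpa using invSqTail_sq_le x
  | succ k ih =>
    rw [Function.iterate_succ_apply']
    refine hasLogPowUpperBound_invSqConv_succ ih (C := 2 ^ (k + 1) * 4) (by positivity) fun x => ?_
    refine (iterate_invSqConv_le invSqTail_sq_le (k + 1) x).trans_eq ?_
    rw [ENNReal.ofReal_mul (by positivity), ENNReal.ofReal_pow zero_le_two]
    simp

theorem stmt_7 (j : ℕ) (hj : 1 ≤ j) :
    ∃ c₁ c₂ M₀ : ℝ, 0 < c₁ ∧ 0 < c₂ ∧ 1 < M₀ ∧
      ∀ M : ℝ, M₀ ≤ M →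
        c₁ * (Real.log M) ^ (j - 1) / M ≤ overlapSum j M ∧
        overlapSum j M ≤ c₂ * (Real.log M) ^ (j - 1) / M := by
  obtain ⟨k, rfl⟩ : ∃ k, j = k + 1 := ⟨j - 1, by omega⟩
  obtain ⟨a, ha, hlower⟩ := hasLogPowLowerBound_iterate_invSqConv k
  obtain ⟨b, hb, hupper⟩ := hasLogPowUpperBound_iterate_invSqConv k
  obtain ⟨M₀, hM₀⟩ := eventually_atTop.mp ((hlower.and hupper).and (eventually_gt_atTop 1))
  refine ⟨a, b, max M₀ 2, ha, hb, one_lt_two.trans_le (le_max_right _ _), fun M hM => ?_⟩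
  obtain ⟨⟨hl, hu⟩, hM1⟩ := hM₀ M (le_of_max_le_left hM)
  have hlog : 0 ≤ log M ^ k := pow_nonneg (log_nonneg hM1.le) k
  rw [Nat.add_sub_cancel, overlapSum_eq_toReal_iterate_invSqConv _ (zero_lt_one.trans hM1)]
  exact ⟨(ENNReal.ofReal_le_iff_le_toReal (ne_top_of_le_ne_top ENNReal.ofReal_ne_top hu)).mp hl,
    ENNReal.toReal_le_of_le_ofReal (by positivity) hu⟩
end

section
/- There exist absolute constants c₁, c₂ > 0 and M₀ > 1 such that for all real M ≥ M₀: c₁/M ≤ ∑ 1/(a₁²·a₂²·b²·c₁²·c₂²) ≤ c₂/M, where the sum ranges over all tuples (a₁, a₂, b, c₁, c₂) of positive integers satisfying a₁·a₂·b ≥ M and b·c₁·c₂ ≥ M. -/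
/-!
Upper bound by Rankin's trick. If `b ≤ M`, multiplying the summand by
`((a₁a₂b / M) (bc₁c₂ / M)) ^ (3/4) ≥ 1` bounds it by `(a₁a₂c₁c₂) ^ (-5/4) · M ^ (-3/2) b ^ (-1/2)`;
if `b > M` it is at most `(a₁a₂c₁c₂) ^ (-5/4) · b ^ (-2)`. This majorant factors over the five
variables, the sums over `a₁, a₂, c₁, c₂` converge, and the sum over `b` is at most
`M ^ (-3/2) · 2√M + ∑_{b > M} b ^ (-2) ≤ 4 / M`.
The lower bound already comes from the tuples `(1, 1, b, 1, 1)` with `M ≤ b ≤ 2M`.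
-/

open MeasureTheory Filter Set

/-- The series ∑ 1/(a₁²·a₂²·b²·c₁²·c₂²) over positive integer tuples with
a₁·a₂·b ≥ M and b·c₁·c₂ ≥ M. -/
noncomputable def overlapSum5 (M : ℝ) : ℝ :=
  ∑' p : {p : ℕ × ℕ × ℕ × ℕ × ℕ //
      0 < p.1 ∧ 0 < p.2.1 ∧ 0 < p.2.2.1 ∧ 0 < p.2.2.2.1 ∧ 0 < p.2.2.2.2 ∧
      M ≤ ((p.1 * p.2.1 * p.2.2.1 : ℕ) : ℝ) ∧
      M ≤ ((p.2.2.1 * p.2.2.2.1 * p.2.2.2.2 : ℕ) : ℝ)},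
    (1 : ℝ) /
      ((p.1.1 : ℝ) ^ 2 * (p.1.2.1 : ℝ) ^ 2 * (p.1.2.2.1 : ℝ) ^ 2 *
        (p.1.2.2.2.1 : ℝ) ^ 2 * (p.1.2.2.2.2 : ℝ) ^ 2)

open Finset Real

def overlapSet (M : ℝ) : Set (ℕ × ℕ × ℕ × ℕ × ℕ) :=
  {p | 0 < p.1 ∧ 0 < p.2.1 ∧ 0 < p.2.2.1 ∧ 0 < p.2.2.2.1 ∧ 0 < p.2.2.2.2 ∧
      M ≤ ((p.1 * p.2.1 * p.2.2.1 : ℕ) : ℝ) ∧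
      M ≤ ((p.2.2.1 * p.2.2.2.1 * p.2.2.2.2 : ℕ) : ℝ)}

noncomputable def overlapTerm (p : ℕ × ℕ × ℕ × ℕ × ℕ) : ℝ :=
  1 / ((p.1 : ℝ) ^ 2 * (p.2.1 : ℝ) ^ 2 * (p.2.2.1 : ℝ) ^ 2 *
    (p.2.2.2.1 : ℝ) ^ 2 * (p.2.2.2.2 : ℝ) ^ 2)

theorem overlapSum5_eq_tsum (M : ℝ) :
    overlapSum5 M = ∑' p : overlapSet M, overlapTerm p := rfl

theorem overlapTerm_nonneg (p : ℕ × ℕ × ℕ × ℕ × ℕ) : 0 ≤ overlapTerm p := by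
  unfold overlapTerm; positivity

theorem HasSum.mul_of_nonneg {ι κ : Type*} {f : ι → ℝ} {g : κ → ℝ} {s t : ℝ}
    (hf : HasSum f s) (hg : HasSum g t) (hf₀ : ∀ i, 0 ≤ f i) (hg₀ : ∀ k, 0 ≤ g k) :
    HasSum (fun x : ι × κ ↦ f x.1 * g x.2) (s * t) :=
  hf.mul hg (hf.summable.mul_of_nonneg hg.summable hf₀ hg₀)

theorem sum_range_succ_inv_sqrt_le (N : ℕ) :
    ∑ i ∈ range (N + 1), (√(i : ℝ))⁻¹ ≤ 2 * √(N : ℝ) := by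
  induction N with
  | zero => simp
  | succ N ih =>
    rw [sum_range_succ]
    have hN : √(N : ℝ) ≤ √((N + 1 : ℕ) : ℝ) := sqrt_le_sqrt (by simp)
    have hpos : 0 < √((N + 1 : ℕ) : ℝ) := sqrt_pos.2 (by positivity)
    -- `(√(N+1) - √N) (√(N+1) + √N) = 1` and `√N + √(N+1) ≤ 2 √(N+1)`
    have hstep : (√((N + 1 : ℕ) : ℝ))⁻¹ ≤ 2 * √((N + 1 : ℕ) : ℝ) - 2 * √(N : ℝ) := by
      have hsq : √((N + 1 : ℕ) : ℝ) ^ 2 = √(N : ℝ) ^ 2 + 1 := by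
        rw [sq_sqrt (by positivity), sq_sqrt (by positivity)]; push_cast; ring
      rw [inv_le_iff_one_le_mul₀' hpos]
      nlinarith
    linarith

noncomputable def middleWeight (M : ℝ) (b : ℕ) : ℝ :=
  if (b : ℝ) ≤ M then (M ^ (3 / 2 : ℝ) * √(b : ℝ))⁻¹ else ((b : ℝ) ^ 2)⁻¹

theorem middleWeight_nonneg {M : ℝ} (hM : 0 ≤ M) (b : ℕ) : 0 ≤ middleWeight M b := by
  unfold middleWeight; split_ifs <;> positivity

theorem sum_range_middleWeight_le {M : ℝ} (hM : 1 ≤ M) (n : ℕ) :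
    ∑ i ∈ range n, middleWeight M i ≤ 4 / M := by
  have hM₀ : 0 < M := by linarith
  have hfloor : M - 1 < ⌊M⌋₊ := Nat.sub_one_lt_floor M
  have hsmall :
      ∑ i ∈ range n with ((i : ℕ) : ℝ) ≤ M, (M ^ (3 / 2 : ℝ) * √(i : ℝ))⁻¹ ≤ 2 / M := by
    have hsub : (range n).filter (fun i : ℕ ↦ (i : ℝ) ≤ M) ⊆ range (⌊M⌋₊ + 1) := fun i hi ↦ by
      simp only [mem_filter] at hi
      exact mem_range_succ_iff.2 (Nat.le_floor hi.2)
    have hM32 : M ^ (3 / 2 : ℝ) = M * √M := by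
      rw [show (3 / 2 : ℝ) = 1 + 1 / 2 by norm_num, rpow_add hM₀, rpow_one, sqrt_eq_rpow]
    calc ∑ i ∈ range n with ((i : ℕ) : ℝ) ≤ M, (M ^ (3 / 2 : ℝ) * √(i : ℝ))⁻¹
        = (M ^ (3 / 2 : ℝ))⁻¹ * ∑ i ∈ range n with ((i : ℕ) : ℝ) ≤ M, (√(i : ℝ))⁻¹ := by
          simp only [mul_sum, mul_inv]
      _ ≤ (M ^ (3 / 2 : ℝ))⁻¹ * ∑ i ∈ range (⌊M⌋₊ + 1), (√(i : ℝ))⁻¹ :=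
          mul_le_mul_of_nonneg_left
            (sum_le_sum_of_subset_of_nonneg hsub fun _ _ _ ↦ by positivity) (by positivity)
      _ ≤ (M ^ (3 / 2 : ℝ))⁻¹ * (2 * √M) := by
          gcongr
          exact (sum_range_succ_inv_sqrt_le _).trans (by gcongr; exact Nat.floor_le hM₀.le)
      _ = 2 / M := by
          rw [hM32]; field_simp
  have hlarge : ∑ i ∈ range n with ¬((i : ℕ) : ℝ) ≤ M, ((i : ℝ) ^ 2)⁻¹ ≤ 2 / M := by
    have hsub : (range n).filter (fun i : ℕ ↦ ¬(i : ℝ) ≤ M) ⊆ Ioo ⌊M⌋₊ n := fun i hi ↦ by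
      simp only [mem_filter, Finset.mem_range, not_le] at hi
      exact Finset.mem_Ioo.2 ⟨(Nat.floor_lt hM₀.le).2 hi.2, hi.1⟩
    calc ∑ i ∈ range n with ¬((i : ℕ) : ℝ) ≤ M, ((i : ℝ) ^ 2)⁻¹
        ≤ ∑ i ∈ Ioo ⌊M⌋₊ n, ((i : ℝ) ^ 2)⁻¹ :=
          sum_le_sum_of_subset_of_nonneg hsub fun _ _ _ ↦ by positivity
      _ ≤ 2 / (⌊M⌋₊ + 1) := sum_Ioo_inv_sq_le _ _
      _ ≤ 2 / M := by gcongr; linarith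
  unfold middleWeight
  rw [sum_ite]
  exact (add_le_add hsmall hlarge).trans_eq (by ring)

theorem summable_middleWeight {M : ℝ} (hM : 1 ≤ M) : Summable (middleWeight M) :=
  summable_of_sum_range_le (middleWeight_nonneg (by linarith)) (sum_range_middleWeight_le hM)

theorem tsum_middleWeight_le {M : ℝ} (hM : 1 ≤ M) : ∑' b, middleWeight M b ≤ 4 / M :=
  tsum_le_of_sum_range_le (middleWeight_nonneg (by linarith)) (sum_range_middleWeight_le hM)

theorem rpow_mul_sqrt_le_sq {X b M : ℝ} (hX : 0 < X) (hb : 0 < b) (hM : 0 ≤ M)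
    (h : M ^ 2 ≤ X * b ^ 2) : X ^ (5 / 4 : ℝ) * (M ^ (3 / 2 : ℝ) * √b) ≤ (X * b) ^ 2 := by
  have hM32 : M ^ (3 / 2 : ℝ) ≤ X ^ (3 / 4 : ℝ) * b ^ (3 / 2 : ℝ) :=
    calc M ^ (3 / 2 : ℝ) = (M ^ 2) ^ (3 / 4 : ℝ) := by
          rw [← rpow_natCast, ← rpow_mul hM]; norm_num
      _ ≤ (X * b ^ 2) ^ (3 / 4 : ℝ) := by gcongr
      _ = X ^ (3 / 4 : ℝ) * b ^ (3 / 2 : ℝ) := by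
          rw [mul_rpow hX.le (by positivity), ← rpow_natCast b 2, ← rpow_mul hb.le]; norm_num
  calc X ^ (5 / 4 : ℝ) * (M ^ (3 / 2 : ℝ) * √b)
      ≤ X ^ (5 / 4 : ℝ) * (X ^ (3 / 4 : ℝ) * b ^ (3 / 2 : ℝ) * b ^ (1 / 2 : ℝ)) := by
        rw [sqrt_eq_rpow]; gcongr
    _ = X ^ (5 / 4 + 3 / 4 : ℝ) * b ^ (3 / 2 + 1 / 2 : ℝ) := by
        rw [rpow_add hX, rpow_add hb]; ring
    _ = (X * b) ^ 2 := by norm_num; ring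

noncomputable def outerWeight (n : ℕ) : ℝ := ((n : ℝ) ^ (5 / 4 : ℝ))⁻¹

theorem outerWeight_nonneg (n : ℕ) : 0 ≤ outerWeight n := by unfold outerWeight; positivity

theorem summable_outerWeight : Summable outerWeight :=
  summable_nat_rpow_inv.2 (by norm_num)

noncomputable def overlapMajorant (M : ℝ) (p : ℕ × ℕ × ℕ × ℕ × ℕ) : ℝ :=
  outerWeight p.1 * (outerWeight p.2.1 * (middleWeight M p.2.2.1 *
    (outerWeight p.2.2.2.1 * outerWeight p.2.2.2.2)))

theorem overlapMajorant_nonneg {M : ℝ} (hM : 0 ≤ M) (p : ℕ × ℕ × ℕ × ℕ × ℕ) :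
    0 ≤ overlapMajorant M p :=
  mul_nonneg (outerWeight_nonneg _) <| mul_nonneg (outerWeight_nonneg _) <|
    mul_nonneg (middleWeight_nonneg hM _) <|
      mul_nonneg (outerWeight_nonneg _) (outerWeight_nonneg _)

theorem hasSum_overlapMajorant {M : ℝ} (hM : 1 ≤ M) :
    HasSum (overlapMajorant M) ((∑' n, outerWeight n) ^ 4 * ∑' b, middleWeight M b) := by
  have hO := outerWeight_nonneg
  have hW := middleWeight_nonneg (M := M) (by linarith)
  have ho := summable_outerWeight.hasSum
  have h₄₅ := ho.mul_of_nonneg ho hO hO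
  have h₃₄₅ := (summable_middleWeight hM).hasSum.mul_of_nonneg h₄₅ hW
    fun _ ↦ mul_nonneg (hO _) (hO _)
  have h₂₃₄₅ := ho.mul_of_nonneg h₃₄₅ hO
    fun _ ↦ mul_nonneg (hW _) (mul_nonneg (hO _) (hO _))
  have h := ho.mul_of_nonneg h₂₃₄₅ hO
    fun _ ↦ mul_nonneg (hO _) (mul_nonneg (hW _) (mul_nonneg (hO _) (hO _)))
  unfold overlapMajorant
  convert h using 1
  ring

theorem overlapTerm_le_overlapMajorant {M : ℝ} (hM : 0 < M) {p : ℕ × ℕ × ℕ × ℕ × ℕ}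
    (hp : p ∈ overlapSet M) : overlapTerm p ≤ overlapMajorant M p := by
  obtain ⟨a₁, a₂, b, c₁, c₂⟩ := p
  obtain ⟨ha₁, ha₂, hb, hc₁, hc₂, hA, hC⟩ := hp
  dsimp only at ha₁ ha₂ hb hc₁ hc₂ hA hC
  push_cast at hA hC
  set X : ℝ := a₁ * a₂ * c₁ * c₂ with hXdef
  have hX : 1 ≤ X := by
    have : 0 < a₁ * a₂ * c₁ * c₂ := by positivity
    rw [hXdef]; exact_mod_cast this
  have hb' : (0 : ℝ) < b := by exact_mod_cast hb
  have hterm : overlapTerm (a₁, a₂, b, c₁, c₂) = ((X * b) ^ 2)⁻¹ := by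
    rw [overlapTerm, hXdef, one_div]; ring
  have hmaj : overlapMajorant M (a₁, a₂, b, c₁, c₂) = (X ^ (5 / 4 : ℝ))⁻¹ * middleWeight M b := by
    simp only [overlapMajorant, outerWeight, hXdef]
    rw [mul_rpow (by positivity) (by positivity), mul_rpow (by positivity) (by positivity),
      mul_rpow (by positivity) (by positivity)]
    ring
  rw [hterm, hmaj, middleWeight]
  split_ifs with hbM <;> rw [← mul_inv]
  · refine inv_anti₀ (by positivity) (rpow_mul_sqrt_le_sq (by linarith) hb' hM.le ?_)
    calc M ^ 2 = M * M := sq M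
      _ ≤ (a₁ * a₂ * b) * (b * c₁ * c₂) := mul_le_mul hA hC hM.le (by positivity)
      _ = X * b ^ 2 := by rw [hXdef]; ring
  · refine inv_anti₀ (by positivity) ?_
    calc X ^ (5 / 4 : ℝ) * b ^ 2 ≤ X ^ (2 : ℝ) * b ^ 2 := by
          gcongr
          norm_num
      _ = (X * b) ^ 2 := by rw [rpow_two]; ring

theorem summable_overlapTerm {M : ℝ} (hM : 1 ≤ M) :
    Summable fun p : overlapSet M ↦ overlapTerm p :=
  ((hasSum_overlapMajorant hM).summable.subtype _).of_nonneg_of_le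
    (fun p ↦ overlapTerm_nonneg p) fun p ↦ overlapTerm_le_overlapMajorant (by linarith) p.2

theorem overlapSum5_le {M : ℝ} (hM : 1 ≤ M) :
    overlapSum5 M ≤ 4 * (∑' n, outerWeight n) ^ 4 / M := by
  have hmaj := hasSum_overlapMajorant hM
  calc overlapSum5 M = ∑' p : overlapSet M, overlapTerm p := overlapSum5_eq_tsum M
    _ ≤ ∑' p : overlapSet M, overlapMajorant M p :=
        (summable_overlapTerm hM).tsum_le_tsum
          (fun p ↦ overlapTerm_le_overlapMajorant (by linarith) p.2) (hmaj.summable.subtype _)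
    _ ≤ ∑' p, overlapMajorant M p :=
        hmaj.summable.tsum_subtype_le _ _ (overlapMajorant_nonneg (by linarith))
    _ = (∑' n, outerWeight n) ^ 4 * ∑' b, middleWeight M b := hmaj.tsum_eq
    _ ≤ (∑' n, outerWeight n) ^ 4 * (4 / M) := by
        gcongr
        exact tsum_middleWeight_le hM
    _ = 4 * (∑' n, outerWeight n) ^ 4 / M := by ring

theorem one_div_eight_div_le_overlapSum5 {M : ℝ} (hM : 1 ≤ M) : 1 / 8 / M ≤ overlapSum5 M := by
  set N := ⌈M⌉₊
  have hMN : M ≤ N := Nat.le_ceil M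
  have hN : (N : ℝ) < 2 * M := Nat.ceil_lt_two_mul (by linarith)
  have hN₀ : (0 : ℝ) < N := by linarith
  let e : ℕ → overlapSet M := fun k ↦ ⟨(1, 1, N + k, 1, 1), by
    refine ⟨one_pos, one_pos, by positivity, one_pos, one_pos, ?_, ?_⟩ <;>
      simpa using hMN.trans (by simp)⟩
  have he : Function.Injective e := fun k l hkl ↦ by simpa [e] using congrArg Subtype.val hkl
  have hterm : ∀ k, overlapTerm (e k) = (((N + k : ℕ) : ℝ) ^ 2)⁻¹ := fun k ↦ by
    simp [e, overlapTerm]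
  have hterm_ge : ∀ k ∈ range N, ((2 * N : ℝ) ^ 2)⁻¹ ≤ overlapTerm (e k) := fun k hk ↦ by
    rw [hterm]
    have : k < N := Finset.mem_range.1 hk
    gcongr
    push_cast
    exact_mod_cast (by omega : N + k ≤ 2 * N)
  calc 1 / 8 / M ≤ N • ((2 * N : ℝ) ^ 2)⁻¹ := by
        rw [nsmul_eq_mul, div_div, div_le_iff₀ (by positivity)]
        field_simp
        linarith
    _ ≤ ∑ k ∈ range N, overlapTerm (e k) := by
        simpa using card_nsmul_le_sum (range N) _ _ hterm_ge
    _ ≤ ∑' k, overlapTerm (e k) :=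
        ((summable_overlapTerm hM).comp_injective he).sum_le_tsum _
          fun k _ ↦ overlapTerm_nonneg _
    _ ≤ overlapSum5 M :=
        tsum_comp_le_tsum_of_inj (summable_overlapTerm hM) (fun p ↦ overlapTerm_nonneg p) he

theorem stmt_8 :
    ∃ c₁ c₂ M₀ : ℝ, 0 < c₁ ∧ 0 < c₂ ∧ 1 < M₀ ∧
      ∀ M : ℝ, M₀ ≤ M →
        c₁ / M ≤ overlapSum5 M ∧ overlapSum5 M ≤ c₂ / M := by
  have hK : 0 < ∑' n, outerWeight n :=
    summable_outerWeight.tsum_pos outerWeight_nonneg 1 (by simp [outerWeight])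
  exact ⟨1 / 8, 4 * (∑' n, outerWeight n) ^ 4, 2, by norm_num, by positivity, by norm_num,
    fun M hM ↦ ⟨one_div_eight_div_le_overlapSum5 (by linarith), overlapSum5_le (by linarith)⟩⟩
end

section
/- Let ℓ ≥ 2 and let r, j ≥ 1 be integers with r + j = ℓ. There exist a constant C > 0 and M₀ > 1, depending only on ℓ, such that for all real M ≥ M₀: ∑ 1/(a₁²⋯a_r²·b₁²⋯b_j²·c₁²⋯c_r²) ≤ C·(log M)^{2(j−1)}/M, where the sum ranges over all tuples (a₁,…,a_r, b₁,…,b_j, c₁,…,c_r) of positive integers satisfying a₁⋯a_r·b₁⋯b_j ≥ M and b₁⋯b_j·c₁⋯c_r ≥ M. -/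
/-!
Summing over `b` first, the sums over `a` and `c` decouple: the series is
`∑_b w(b) F_r(M / P(b))²`, where `w(b) = ∏ bᵢ⁻²`, `P(b) = ∏ bᵢ` and `F_k(T) = ∑_{P(a) ≥ T} w(a)`.
Both `F_k` and the outer sum are controlled by the damped masses
`Φ_{k,s}(T) = ∑_b w(b) min(1, P(b)/T)² (1 + log⁺ (T/P(b)))^s ≪ (1 + log T)^(k-1) / T`,
proved by induction on `k`: splitting off one coordinate `x`, the terms with `x ≤ T` leave a
harmonic sum `≪ log T`, and those with `x > T` a tail of `∑ x⁻²`, which is `≪ 1/T`.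
Since `F_k ≤ Φ_{k,0}`, this gives `F_r(T)² ≪ min(1, 1/T)² (1 + log⁺ T)^(2(r-1))`, hence the
series is `≪ Φ_{j,2(r-1)}(M) ≪ (1 + log M)^(j-1) / M`.
-/

open MeasureTheory Filter Set

/-- The series ∑ 1/(a₁²⋯a_r²·b₁²⋯b_j²·c₁²⋯c_r²) over positive integer tuples
with a₁⋯a_r·b₁⋯b_j ≥ M and b₁⋯b_j·c₁⋯c_r ≥ M. -/
noncomputable def overlapSumRJ (r j : ℕ) (M : ℝ) : ℝ :=
  ∑' p : {p : (Fin r → ℕ) × (Fin j → ℕ) × (Fin r → ℕ) //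
      (∀ i, 0 < p.1 i) ∧ (∀ i, 0 < p.2.1 i) ∧ (∀ i, 0 < p.2.2 i) ∧
      M ≤ (((∏ i, p.1 i) * ∏ i, p.2.1 i : ℕ) : ℝ) ∧
      M ≤ (((∏ i, p.2.1 i) * ∏ i, p.2.2 i : ℕ) : ℝ)},
    (1 : ℝ) /
      ((∏ i, (p.1.1 i : ℝ) ^ 2) * (∏ i, (p.1.2.1 i : ℝ) ^ 2) *
        (∏ i, (p.1.2.2 i : ℝ) ^ 2))

open scoped ENNReal

namespace OverlapSum

lemma sum_le_sum_Icc_floor {f : ℕ → ℝ} (hf : ∀ n, 0 ≤ f n) {T : ℝ} {t : Finset ℕ}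
    (ht : ∀ n ∈ t, 1 ≤ n ∧ (n : ℝ) ≤ T) : ∑ n ∈ t, f n ≤ ∑ n ∈ Finset.Icc 1 ⌊T⌋₊, f n :=
  Finset.sum_le_sum_of_subset_of_nonneg
    (fun n hn => Finset.mem_Icc.2 ⟨(ht n hn).1, Nat.le_floor (ht n hn).2⟩) fun n _ _ => hf n

lemma sum_Icc_one_div_le_one_add_log {T : ℝ} (hT : 1 ≤ T) :
    ∑ n ∈ Finset.Icc 1 ⌊T⌋₊, 1 / (n : ℝ) ≤ 1 + Real.log T := by
  have hfloor : (0 : ℝ) < ⌊T⌋₊ := by exact_mod_cast Nat.floor_pos.2 hT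
  calc ∑ n ∈ Finset.Icc 1 ⌊T⌋₊, 1 / (n : ℝ) = harmonic ⌊T⌋₊ := by
        simp [harmonic_eq_sum_Icc]
    _ ≤ 1 + Real.log ⌊T⌋₊ := harmonic_le_one_add_log _
    _ ≤ 1 + Real.log T := by gcongr; exact Nat.floor_le (by linarith)

lemma sum_Icc_one_div_sqrt_le (N : ℕ) :
    ∑ n ∈ Finset.Icc 1 N, 1 / √(n : ℝ) ≤ 2 * √(N : ℝ) := by
  induction N with
  | zero => simp
  | succ N ih =>
    rw [Finset.sum_Icc_succ_top (by omega)]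
    have hsq : √((N + 1 : ℕ) : ℝ) ^ 2 = √(N : ℝ) ^ 2 + 1 := by
      rw [Real.sq_sqrt (by positivity), Real.sq_sqrt (by positivity)]; push_cast; ring
    have hpos : 0 < √((N + 1 : ℕ) : ℝ) := Real.sqrt_pos.2 (by positivity)
    -- `1 / √(N+1) ≤ 2 (√(N+1) - √N)` is `(√(N+1) - √N)² ≥ 0` after clearing the denominator
    have hstep : 1 / √((N + 1 : ℕ) : ℝ) ≤ 2 * √((N + 1 : ℕ) : ℝ) - 2 * √(N : ℝ) := by
      rw [div_le_iff₀ hpos]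
      nlinarith [sq_nonneg (√((N + 1 : ℕ) : ℝ) - √(N : ℝ))]
    linarith

lemma sum_one_div_sq_le {T : ℝ} (hT : 0 < T) {t : Finset ℕ} (ht : ∀ n ∈ t, T ≤ n) :
    ∑ n ∈ t, 1 / (n : ℝ) ^ 2 ≤ 2 / T := by
  have hceil : 1 ≤ ⌈T⌉₊ := Nat.one_le_ceil_iff.2 hT
  have hsub : t ⊆ Finset.Ioo (⌈T⌉₊ - 1) (t.sup id + 1) := fun n hn =>
    Finset.mem_Ioo.2 ⟨by have := Nat.ceil_le.2 (ht n hn); omega,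
      Nat.lt_succ_of_le (Finset.le_sup (f := id) hn)⟩
  calc ∑ n ∈ t, 1 / (n : ℝ) ^ 2
      ≤ ∑ n ∈ Finset.Ioo (⌈T⌉₊ - 1) (t.sup id + 1), ((n : ℝ) ^ 2)⁻¹ := by
        simp_rw [one_div]
        exact Finset.sum_le_sum_of_subset_of_nonneg hsub fun _ _ _ => by positivity
    _ ≤ 2 / ((⌈T⌉₊ - 1 : ℕ) + 1) := sum_Ioo_inv_sq_le _ _
    _ = 2 / ⌈T⌉₊ := by rw [Nat.cast_sub hceil]; push_cast; ring_nf
    _ ≤ 2 / T := by gcongr; exact Nat.le_ceil T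

lemma tsum_pnat_ite_ofReal_le (q : ℕ → Prop) [DecidablePred q] {f : ℕ → ℝ} (hf : ∀ n, 0 ≤ f n)
    {c : ℝ} (h : ∀ t : Finset ℕ, (∀ n ∈ t, 1 ≤ n ∧ q n) → ∑ n ∈ t, f n ≤ c) :
    ∑' n : ℕ+, (if q n then ENNReal.ofReal (f n) else 0) ≤ ENNReal.ofReal c := by
  rw [ENNReal.tsum_eq_iSup_sum]
  refine iSup_le fun s => ?_
  rw [← Finset.sum_filter, ← ENNReal.ofReal_sum_of_nonneg (f := fun n : ℕ+ => f n) fun n _ => hf n]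
  refine ENNReal.ofReal_le_ofReal <|
    (Finset.sum_map _ ⟨PNat.val, PNat.coe_injective⟩ f).symm.trans_le (h _ fun n hn => ?_)
  obtain ⟨m, hm, rfl⟩ := Finset.mem_map.1 hn
  exact ⟨m.pos, (Finset.mem_filter.1 hm).2⟩

lemma tsum_le_mul_tsum_ite_add_mul_tsum_ite {α : Type*} {f a b : α → ℝ≥0∞} (p q : α → Prop)
    [DecidablePred p] [DecidablePred q] (hpq : ∀ x, p x ∨ q x) {c d : ℝ≥0∞}
    (ha : ∀ x, p x → f x ≤ c * a x) (hb : ∀ x, q x → f x ≤ d * b x) :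
    ∑' x, f x ≤ c * ∑' x, (if p x then a x else 0) + d * ∑' x, (if q x then b x else 0) := by
  rw [← ENNReal.tsum_mul_left, ← ENNReal.tsum_mul_left, ← ENNReal.tsum_add]
  refine ENNReal.tsum_le_tsum fun x => ?_
  rcases hpq x with h | h
  · exact (ha x h).trans (by simp [h])
  · exact (hb x h).trans (by simp [h])

lemma tsum_fin_succ {α : Type*} {k : ℕ} (f : (Fin (k + 1) → α) → ℝ≥0∞) :
    ∑' b, f b = ∑' (x : α) (b : Fin k → α), f (Fin.cons x b) := by
  rw [← (Fin.consEquiv fun _ => α).tsum_eq f, ENNReal.tsum_prod']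
  rfl

lemma ofReal_tsum_le_tsum_ofReal {ι : Type*} {f : ι → ℝ} (hf : ∀ i, 0 ≤ f i) :
    ENNReal.ofReal (∑' i, f i) ≤ ∑' i, ENNReal.ofReal (f i) := by
  calc ENNReal.ofReal (∑' i, f i) = ENNReal.ofReal (∑' i, ENNReal.ofReal (f i)).toReal := by
        rw [ENNReal.tsum_toReal_eq fun _ => ENNReal.ofReal_ne_top]
        simp_rw [ENNReal.toReal_ofReal (hf _)]
    _ ≤ ∑' i, ENNReal.ofReal (f i) := ENNReal.ofReal_toReal_le

lemma tsum_ite_one_div_le_one_add_log {T : ℝ} (hT : 1 ≤ T) :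
    ∑' n : ℕ+, (if (n : ℝ) ≤ T then ENNReal.ofReal (1 / (n : ℝ)) else 0)
      ≤ ENNReal.ofReal (1 + Real.log T) :=
  tsum_pnat_ite_ofReal_le (fun n : ℕ => (n : ℝ) ≤ T) (fun n => by positivity) fun _ ht =>
    (sum_le_sum_Icc_floor (fun n => by positivity) ht).trans (sum_Icc_one_div_le_one_add_log hT)

lemma tsum_ite_one_div_sqrt_le {T : ℝ} (hT : 1 ≤ T) :
    ∑' n : ℕ+, (if (n : ℝ) ≤ T then ENNReal.ofReal (1 / √(n : ℝ)) else 0)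
      ≤ ENNReal.ofReal (2 * √T) :=
  tsum_pnat_ite_ofReal_le (fun n : ℕ => (n : ℝ) ≤ T) (fun n => by positivity) fun _ ht =>
    (sum_le_sum_Icc_floor (fun n => by positivity) ht).trans <|
      (sum_Icc_one_div_sqrt_le _).trans <| by gcongr; exact Nat.floor_le (by linarith)

noncomputable def invSq (n : ℕ+) : ℝ≥0∞ := ENNReal.ofReal (1 / (n : ℝ) ^ 2)

lemma tsum_ite_invSq_le {T : ℝ} (hT : 0 < T) :
    ∑' n : ℕ+, (if T ≤ n then invSq n else 0) ≤ ENNReal.ofReal (2 / T) :=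
  tsum_pnat_ite_ofReal_le (fun n : ℕ => T ≤ n) (fun n => by positivity) fun _ ht =>
    sum_one_div_sq_le hT fun n hn => (ht n hn).2

lemma tsum_invSq_le : ∑' n, invSq n ≤ 2 := by
  have h1 (n : ℕ+) : (1 : ℝ) ≤ n := by exact_mod_cast n.pos
  simpa [h1] using tsum_ite_invSq_le one_pos

noncomputable def tupleWeight {k : ℕ} (b : Fin k → ℕ+) : ℝ≥0∞ := ∏ i, invSq (b i)

def tupleProd {k : ℕ} (b : Fin k → ℕ+) : ℝ := ∏ i, (b i : ℝ)

lemma tupleWeight_cons {k : ℕ} (x : ℕ+) (b : Fin k → ℕ+) :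
    tupleWeight (Fin.cons x b) = invSq x * tupleWeight b := by
  simp [tupleWeight, Fin.prod_univ_succ]

lemma tupleProd_cons {k : ℕ} (x : ℕ+) (b : Fin k → ℕ+) :
    tupleProd (Fin.cons x b) = x * tupleProd b := by
  simp [tupleProd, Fin.prod_univ_succ]

lemma one_le_tupleProd {k : ℕ} (b : Fin k → ℕ+) : 1 ≤ tupleProd b :=
  Finset.one_le_prod fun i _ => by exact_mod_cast (b i).pos

lemma tupleProd_pos {k : ℕ} (b : Fin k → ℕ+) : 0 < tupleProd b :=
  one_pos.trans_le (one_le_tupleProd b)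

lemma tupleWeight_eq {k : ℕ} (b : Fin k → ℕ+) :
    tupleWeight b = ENNReal.ofReal (1 / ∏ i, (b i : ℝ) ^ 2) := by
  rw [tupleWeight, one_div, ← Finset.prod_inv_distrib,
    ENNReal.ofReal_prod_of_nonneg fun i _ => by positivity]
  simp [invSq]

lemma tsum_tupleWeight_le (k : ℕ) : ∑' b : Fin k → ℕ+, tupleWeight b ≤ 2 ^ k := by
  induction k with
  | zero => simp [tupleWeight]
  | succ k ih =>
    simp_rw [tsum_fin_succ, tupleWeight_cons, ENNReal.tsum_mul_left, ENNReal.tsum_mul_right,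
      pow_succ']
    exact mul_le_mul' tsum_invSq_le ih

lemma one_add_log_pow_le_mul_sqrt (s : ℕ) :
    ∃ C, 0 ≤ C ∧ ∀ y : ℝ, 1 ≤ y → (1 + Real.log y) ^ s ≤ C * √y := by
  rcases Nat.eq_zero_or_pos s with rfl | hs
  · exact ⟨1, zero_le_one, fun y hy => by simpa using Real.one_le_sqrt.2 hy⟩
  refine ⟨(1 + 2 * s) ^ s, by positivity, fun y hy => ?_⟩
  have hε : (0 : ℝ) < 1 / (2 * s) := by positivity
  -- `log y ≤ 2s · y^(1/(2s))` and `1 ≤ y^(1/(2s))`; the `s`-th power of `y^(1/(2s))` is `√y`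
  have hlog : 1 + Real.log y ≤ (1 + 2 * s) * y ^ (1 / (2 * s : ℝ)) := by
    have h1 := Real.log_le_rpow_div (x := y) (by linarith) hε
    have h2 := Real.one_le_rpow hy hε.le
    rw [div_div_eq_mul_div, div_one] at h1
    nlinarith
  calc (1 + Real.log y) ^ s ≤ ((1 + 2 * s) * y ^ (1 / (2 * s : ℝ))) ^ s := by
        gcongr
        linarith [Real.log_nonneg hy]
    _ = (1 + 2 * s) ^ s * √y := by
        rw [mul_pow, ← Real.rpow_mul_natCast (by linarith), Real.sqrt_eq_rpow]
        congr 2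
        field_simp

noncomputable def decay (s : ℕ) (u : ℝ) : ℝ := (1 + Real.log (max u 1)) ^ s / max u 1 ^ 2

lemma decay_of_le_one {s : ℕ} {u : ℝ} (hu : u ≤ 1) : decay s u = 1 := by
  simp [decay, max_eq_right hu]

lemma decay_of_one_le {s : ℕ} {u : ℝ} (hu : 1 ≤ u) : decay s u = (1 + Real.log u) ^ s / u ^ 2 := by
  simp [decay, max_eq_left hu]

lemma decay_nonneg (s : ℕ) (u : ℝ) : 0 ≤ decay s u := by
  have := Real.log_nonneg (le_max_right u 1)
  unfold decay
  positivity

noncomputable def dampedMass (k s : ℕ) (T : ℝ) : ℝ≥0∞ :=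
  ∑' b : Fin k → ℕ+, tupleWeight b * ENNReal.ofReal (decay s (T / tupleProd b))

lemma dampedMass_zero (s : ℕ) (T : ℝ) : dampedMass 0 s T = ENNReal.ofReal (decay s T) := by
  simp [dampedMass, tupleWeight, tupleProd]

lemma dampedMass_succ (k s : ℕ) (T : ℝ) :
    dampedMass (k + 1) s T = ∑' x : ℕ+, invSq x * dampedMass k s (T / x) := by
  rw [dampedMass, tsum_fin_succ]
  refine tsum_congr fun x => ?_
  rw [dampedMass, ← ENNReal.tsum_mul_left]
  refine tsum_congr fun b => ?_
  rw [tupleWeight_cons, tupleProd_cons, div_div, mul_assoc]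

lemma dampedMass_le_two_pow_of_le_one (k s : ℕ) {T : ℝ} (hT : T ≤ 1) :
    dampedMass k s T ≤ 2 ^ k := by
  refine le_trans (ENNReal.tsum_le_tsum fun b => ?_) (tsum_tupleWeight_le k)
  rw [decay_of_le_one ((div_le_one (tupleProd_pos b)).2 (hT.trans (one_le_tupleProd b))),
    ENNReal.ofReal_one, mul_one]

lemma one_le_div_pnat {T : ℝ} {x : ℕ+} (hx : (x : ℝ) ≤ T) : 1 ≤ T / x :=
  (one_le_div (by exact_mod_cast x.pos)).2 hx

lemma div_pnat_le_one {T : ℝ} {x : ℕ+} (hx : T ≤ x) : T / x ≤ 1 :=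
  (div_le_one (by exact_mod_cast x.pos)).2 hx

lemma dampedMass_one_le_div (s : ℕ) :
    ∃ C, 0 ≤ C ∧ ∀ T : ℝ, 1 ≤ T → dampedMass 1 s T ≤ ENNReal.ofReal (C / T) := by
  obtain ⟨C, hC0, hC⟩ := one_add_log_pow_le_mul_sqrt s
  refine ⟨2 * C + 2, by positivity, fun T hT => ?_⟩
  have hT0 : 0 < T := by linarith
  simp_rw [dampedMass_succ, dampedMass_zero]
  -- below `T` the logarithm is absorbed by `√(T/x)`, above `T` the decay factor is `1`
  have hsmall (x : ℕ+) (hx : (x : ℝ) ≤ T) : invSq x * ENNReal.ofReal (decay s (T / x)) ≤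
      ENNReal.ofReal (C * √T / T ^ 2) * ENNReal.ofReal (1 / √(x : ℝ)) := by
    have hx0 : (0 : ℝ) < x := by exact_mod_cast x.pos
    rw [invSq, ← ENNReal.ofReal_mul (by positivity), ← ENNReal.ofReal_mul (by positivity)]
    refine ENNReal.ofReal_le_ofReal ?_
    calc 1 / (x : ℝ) ^ 2 * decay s (T / x) = (1 + Real.log (T / x)) ^ s / T ^ 2 := by
          rw [decay_of_one_le (one_le_div_pnat hx)]
          field_simp
      _ ≤ C * √(T / x) / T ^ 2 := by gcongr; exact hC _ (one_le_div_pnat hx)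
      _ = C * √T / T ^ 2 * (1 / √(x : ℝ)) := by rw [Real.sqrt_div hT0.le]; ring
  have hlarge (x : ℕ+) (hx : T ≤ x) : invSq x * ENNReal.ofReal (decay s (T / x)) ≤ 1 * invSq x := by
    rw [decay_of_le_one (div_pnat_le_one hx), ENNReal.ofReal_one, mul_one, one_mul]
  calc ∑' x : ℕ+, invSq x * ENNReal.ofReal (decay s (T / x))
      ≤ ENNReal.ofReal (C * √T / T ^ 2) *
          ∑' x : ℕ+, (if (x : ℝ) ≤ T then ENNReal.ofReal (1 / √(x : ℝ)) else 0) +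
        1 * ∑' x : ℕ+, (if T ≤ x then invSq x else 0) :=
        tsum_le_mul_tsum_ite_add_mul_tsum_ite _ _ (fun x => le_total _ _) hsmall hlarge
    _ ≤ ENNReal.ofReal (C * √T / T ^ 2) * ENNReal.ofReal (2 * √T) +
        1 * ENNReal.ofReal (2 / T) := by
        gcongr
        exacts [tsum_ite_one_div_sqrt_le hT, tsum_ite_invSq_le hT0]
    _ = ENNReal.ofReal ((2 * C + 2) / T) := by
        rw [one_mul, ← ENNReal.ofReal_mul (by positivity),
          ← ENNReal.ofReal_add (by positivity) (by positivity)]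
        congr 1
        field_simp
        rw [Real.sq_sqrt hT0.le]
        ring

lemma dampedMass_le (s : ℕ) {k : ℕ} (hk : 1 ≤ k) : ∃ C, 0 ≤ C ∧ ∀ T : ℝ, 1 ≤ T →
    dampedMass k s T ≤ ENNReal.ofReal (C * (1 + Real.log T) ^ (k - 1) / T) := by
  induction k, hk using Nat.le_induction with
  | base => simpa using dampedMass_one_le_div s
  | succ k hk ih =>
    obtain ⟨C, hC0, hC⟩ := ih
    refine ⟨C + 2 ^ (k + 1), by positivity, fun T hT => ?_⟩
    have hT0 : 0 < T := by linarith
    set L := 1 + Real.log T with hL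
    have hL1 : 1 ≤ L := by linarith [Real.log_nonneg hT]
    rw [dampedMass_succ, Nat.add_sub_cancel]
    have hsmall (x : ℕ+) (hx : (x : ℝ) ≤ T) : invSq x * dampedMass k s (T / x) ≤
        ENNReal.ofReal (C * L ^ (k - 1) / T) * ENNReal.ofReal (1 / (x : ℝ)) := by
      have hx1 : (1 : ℝ) ≤ x := by exact_mod_cast x.pos
      have hlog : Real.log (T / x) ≤ Real.log T :=
        Real.log_le_log (by positivity) (div_le_self hT0.le hx1)
      have hlog0 := Real.log_nonneg (one_le_div_pnat hx)
      grw [hC _ (one_le_div_pnat hx), invSq, ← ENNReal.ofReal_mul (by positivity),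
        ← ENNReal.ofReal_mul (by positivity)]
      refine ENNReal.ofReal_le_ofReal ?_
      calc 1 / (x : ℝ) ^ 2 * (C * (1 + Real.log (T / x)) ^ (k - 1) / (T / x))
          = C * (1 + Real.log (T / x)) ^ (k - 1) / T * (1 / x) := by
            field_simp
        _ ≤ C * L ^ (k - 1) / T * (1 / x) := by gcongr; linarith
    have hlarge (x : ℕ+) (hx : T ≤ x) : invSq x * dampedMass k s (T / x) ≤ 2 ^ k * invSq x := by
      rw [mul_comm]
      gcongr
      exact dampedMass_le_two_pow_of_le_one k s (div_pnat_le_one hx)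
    calc ∑' x : ℕ+, invSq x * dampedMass k s (T / x)
        ≤ ENNReal.ofReal (C * L ^ (k - 1) / T) *
            ∑' x : ℕ+, (if (x : ℝ) ≤ T then ENNReal.ofReal (1 / (x : ℝ)) else 0) +
          2 ^ k * ∑' x : ℕ+, (if T ≤ x then invSq x else 0) :=
          tsum_le_mul_tsum_ite_add_mul_tsum_ite _ _ (fun x => le_total _ _) hsmall hlarge
      _ ≤ ENNReal.ofReal (C * L ^ (k - 1) / T) * ENNReal.ofReal L +
          ENNReal.ofReal (2 ^ k) * ENNReal.ofReal (2 / T) := by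
          rw [ENNReal.ofReal_pow zero_le_two, ENNReal.ofReal_ofNat]
          gcongr
          exacts [tsum_ite_one_div_le_one_add_log hT, tsum_ite_invSq_le hT0]
      _ = ENNReal.ofReal ((C * L ^ k + 2 ^ (k + 1)) / T) := by
          rw [← ENNReal.ofReal_mul (by positivity), ← ENNReal.ofReal_mul (by positivity),
            ← ENNReal.ofReal_add (by positivity) (by positivity)]
          congr 1
          have hLk : L ^ k = L * L ^ (k - 1) := by rw [← pow_succ', Nat.sub_add_cancel hk]
          rw [hLk, pow_succ]
          ring
      _ ≤ ENNReal.ofReal ((C + 2 ^ (k + 1)) * L ^ k / T) := by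
          refine ENNReal.ofReal_le_ofReal ?_
          gcongr
          nlinarith [one_le_pow₀ (n := k) hL1, pow_pos (two_pos (α := ℝ)) (k + 1)]

noncomputable def tailMass (k : ℕ) (T : ℝ) : ℝ≥0∞ :=
  ∑' b : Fin k → ℕ+, if T ≤ tupleProd b then tupleWeight b else 0

lemma tailMass_le_dampedMass (k s : ℕ) (T : ℝ) : tailMass k T ≤ dampedMass k s T := by
  refine ENNReal.tsum_le_tsum fun b => ?_
  split_ifs with h
  · rw [decay_of_le_one ((div_le_one (tupleProd_pos b)).2 h), ENNReal.ofReal_one, mul_one]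
  · exact zero_le

lemma tailMass_le_two_pow (k : ℕ) (T : ℝ) : tailMass k T ≤ 2 ^ k :=
  le_trans (ENNReal.tsum_le_tsum fun b => by split_ifs <;> simp) (tsum_tupleWeight_le k)

lemma tailMass_sq_le {k : ℕ} (hk : 1 ≤ k) :
    ∃ C, 0 ≤ C ∧ ∀ T : ℝ, tailMass k T ^ 2 ≤ ENNReal.ofReal (C * decay (2 * (k - 1)) T) := by
  obtain ⟨C, hC0, hC⟩ := dampedMass_le 0 hk
  refine ⟨C ^ 2 + 4 ^ k, by positivity, fun T => ?_⟩
  rcases le_or_gt T 1 with hT | hT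
  · rw [decay_of_le_one hT, mul_one]
    calc tailMass k T ^ 2 ≤ (2 ^ k) ^ 2 := by gcongr; exact tailMass_le_two_pow k T
      _ = ENNReal.ofReal (4 ^ k) := by
        rw [ENNReal.ofReal_pow zero_le_four, ← pow_mul, mul_comm, pow_mul]
        norm_num
      _ ≤ ENNReal.ofReal (C ^ 2 + 4 ^ k) := by gcongr; exact le_add_of_nonneg_left (sq_nonneg C)
  · have hlog := Real.log_nonneg hT.le
    calc tailMass k T ^ 2 ≤ ENNReal.ofReal (C * (1 + Real.log T) ^ (k - 1) / T) ^ 2 := by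
          gcongr
          exact (tailMass_le_dampedMass k 0 T).trans (hC T hT.le)
      _ = ENNReal.ofReal (C ^ 2 * decay (2 * (k - 1)) T) := by
          rw [← ENNReal.ofReal_pow (by positivity), decay_of_one_le hT.le, pow_mul']
          ring_nf
      _ ≤ ENNReal.ofReal ((C ^ 2 + 4 ^ k) * decay (2 * (k - 1)) T) := by
          gcongr
          exacts [decay_nonneg _ _, le_add_of_nonneg_right (by positivity)]

-- indexed by `(b, a, c)`, so that `b` is the outermost summation variable
noncomputable def overlapMass (r j : ℕ) (M : ℝ) : ℝ≥0∞ :=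
  ∑' q : (Fin j → ℕ+) × (Fin r → ℕ+) × (Fin r → ℕ+),
    if M ≤ tupleProd q.2.1 * tupleProd q.1 ∧ M ≤ tupleProd q.1 * tupleProd q.2.2 then
      tupleWeight q.2.1 * tupleWeight q.1 * tupleWeight q.2.2
    else 0

lemma overlapMass_eq_tsum_tailMass_sq (r j : ℕ) (M : ℝ) :
    overlapMass r j M = ∑' b : Fin j → ℕ+, tupleWeight b * tailMass r (M / tupleProd b) ^ 2 := by
  rw [overlapMass, ENNReal.tsum_prod']
  refine tsum_congr fun b => ?_
  have hb := tupleProd_pos b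
  have hsplit (a c : Fin r → ℕ+) :
      (if M ≤ tupleProd a * tupleProd b ∧ M ≤ tupleProd b * tupleProd c then
        tupleWeight a * tupleWeight b * tupleWeight c else 0) =
      tupleWeight b * ((if M / tupleProd b ≤ tupleProd a then tupleWeight a else 0) *
        (if M / tupleProd b ≤ tupleProd c then tupleWeight c else 0)) := by
    simp only [ite_zero_mul_ite_zero, div_le_iff₀ hb, mul_comm (tupleProd c)]
    split_ifs <;> ring
  simp_rw [ENNReal.tsum_prod', hsplit, ENNReal.tsum_mul_left, ENNReal.tsum_mul_right]
  rw [tailMass, sq]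

lemma overlapMass_le {r j : ℕ} (hr : 1 ≤ r) (hj : 1 ≤ j) : ∃ C, 0 ≤ C ∧ ∀ M : ℝ, 1 ≤ M →
    overlapMass r j M ≤ ENNReal.ofReal (C * (1 + Real.log M) ^ (j - 1) / M) := by
  obtain ⟨C₁, hC₁, htail⟩ := tailMass_sq_le hr
  obtain ⟨C₂, hC₂, hdamped⟩ := dampedMass_le (2 * (r - 1)) hj
  refine ⟨C₁ * C₂, by positivity, fun M hM => ?_⟩
  calc overlapMass r j M = ∑' b, tupleWeight b * tailMass r (M / tupleProd b) ^ 2 :=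
        overlapMass_eq_tsum_tailMass_sq r j M
    _ ≤ ∑' b, ENNReal.ofReal C₁ *
          (tupleWeight b * ENNReal.ofReal (decay (2 * (r - 1)) (M / tupleProd b))) :=
        ENNReal.tsum_le_tsum fun b => by
          rw [mul_left_comm, ← ENNReal.ofReal_mul hC₁]
          gcongr
          exact htail _
    _ = ENNReal.ofReal C₁ * dampedMass j (2 * (r - 1)) M := ENNReal.tsum_mul_left
    _ ≤ ENNReal.ofReal C₁ * ENNReal.ofReal (C₂ * (1 + Real.log M) ^ (j - 1) / M) := by
        gcongr
        exact hdamped M hM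
    _ = ENNReal.ofReal (C₁ * C₂ * (1 + Real.log M) ^ (j - 1) / M) := by
        rw [← ENNReal.ofReal_mul hC₁]
        ring_nf

lemma ofReal_overlapSumRJ_le (r j : ℕ) (M : ℝ) :
    ENNReal.ofReal (overlapSumRJ r j M) ≤ overlapMass r j M := by
  refine (ofReal_tsum_le_tsum_ofReal fun p => by positivity).trans <|
    le_of_eq_of_le (tsum_congr fun p => ?_) (ENNReal.tsum_comp_le_tsum_of_injective
      (f := fun p => ((fun i => ⟨p.1.2.1 i, p.2.2.1 i⟩ : Fin j → ℕ+),
        (fun i => ⟨p.1.1 i, p.2.1 i⟩ : Fin r → ℕ+),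
        (fun i => ⟨p.1.2.2 i, p.2.2.2.1 i⟩ : Fin r → ℕ+)))
      ?_ _)
  · obtain ⟨⟨a, b, c⟩, ha, hb, hc, hab, hbc⟩ := p
    push_cast at hab hbc
    rw [if_pos ⟨hab, hbc⟩, tupleWeight_eq, tupleWeight_eq, tupleWeight_eq,
      ← ENNReal.ofReal_mul (by positivity), ← ENNReal.ofReal_mul (by positivity)]
    congr 1
    field_simp
    rfl
  · rintro ⟨⟨a, b, c⟩, _⟩ ⟨⟨a', b', c'⟩, _⟩ h
    simp only [Prod.mk.injEq, funext_iff, Subtype.mk.injEq] at h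
    obtain ⟨hb, ha, hc⟩ := h
    simp only [Subtype.mk.injEq, Prod.mk.injEq]
    exact ⟨funext ha, funext hb, funext hc⟩

lemma eventually_overlapSumRJ_le {r j : ℕ} (hr : 1 ≤ r) (hj : 1 ≤ j) :
    ∀ᶠ C in atTop, ∀ M : ℝ, Real.exp 1 ≤ M →
      overlapSumRJ r j M ≤ C * Real.log M ^ (2 * (j - 1)) / M := by
  obtain ⟨C, hC0, hC⟩ := overlapMass_le hr hj
  filter_upwards [eventually_ge_atTop (C * 2 ^ (j - 1))] with C' hC' M hexp
  have hM : 1 ≤ M := by linarith [Real.add_one_le_exp 1]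
  have hlog : 1 ≤ Real.log M := (Real.le_log_iff_exp_le (by linarith)).2 hexp
  have hsum := (ofReal_overlapSumRJ_le r j M).trans (hC M hM)
  rw [ENNReal.ofReal_le_ofReal_iff (by positivity)] at hsum
  refine hsum.trans ?_
  gcongr ?_ / M
  calc C * (1 + Real.log M) ^ (j - 1) ≤ C * (2 * Real.log M) ^ (j - 1) := by
        gcongr
        linarith
    _ = C * 2 ^ (j - 1) * Real.log M ^ (j - 1) := by ring
    _ ≤ C' * Real.log M ^ (2 * (j - 1)) := by
        have hC'0 : 0 ≤ C' := le_trans (by positivity) hC'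
        gcongr
        omega

end OverlapSum

theorem stmt_9_general (ℓ : ℕ) :
    ∃ C M₀ : ℝ, 0 < C ∧ 1 < M₀ ∧
      ∀ r j : ℕ, 1 ≤ r → 1 ≤ j → r + j = ℓ →
        ∀ M : ℝ, M₀ ≤ M →
          overlapSumRJ r j M ≤ C * (Real.log M) ^ (2 * (j - 1)) / M := by
  have hbound : ∀ r ∈ Finset.range ℓ, ∀ᶠ C in atTop, ∀ j : ℕ, 1 ≤ r → 1 ≤ j → r + j = ℓ →
      ∀ M : ℝ, Real.exp 1 ≤ M → overlapSumRJ r j M ≤ C * Real.log M ^ (2 * (j - 1)) / M := by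
    intro r _
    by_cases h : 1 ≤ r ∧ 1 ≤ ℓ - r
    · filter_upwards [OverlapSum.eventually_overlapSumRJ_le h.1 h.2] with C hC j _ _ hrj
      obtain rfl : j = ℓ - r := by omega
      exact hC
    · exact Eventually.of_forall fun C j hr hj hrj => absurd ⟨hr, by omega⟩ h
  obtain ⟨C, hC, hC0⟩ := (((eventually_all_finset _).2 hbound).and (eventually_gt_atTop 0)).exists
  exact ⟨C, Real.exp 1, hC0, Real.one_lt_exp_iff.2 one_pos, fun r j hr hj hrj =>
    hC r (Finset.mem_range.2 (by omega)) j hr hj hrj⟩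

theorem stmt_9 (ℓ : ℕ) (hℓ : 2 ≤ ℓ) :
    ∃ C M₀ : ℝ, 0 < C ∧ 1 < M₀ ∧
      ∀ r j : ℕ, 1 ≤ r → 1 ≤ j → r + j = ℓ →
        ∀ M : ℝ, M₀ ≤ M →
          overlapSumRJ r j M ≤ C * (Real.log M) ^ (2 * (j - 1)) / M :=
  stmt_9_general ℓ
end
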